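/- arXiv:1911.08004 — 7 statements merged into one kernel-verified Lean document; each statement's English description precedes it below -/
import Mathlib

section
/- For all integers n, k with 1 ≤ k ≤ n and all Δ ≥ 0, the number of 2k-NN graphs at Hamming distance exactly 2Δ from x* satisfies |X_Δ| ≤ (4kn)^Δ. -/
open MeasureTheory Filter
open scoped ENNReal NNReal

noncomputable section

/-- Cyclic distance on `ZMod n`: `min(m, n-m)` where `m` is the representative of `a-b`. -/
def cycDist {n : ℕ} (a b : ZMod n) : ℕ := min (a - b).val (b - a).val

/-- The `2k`-nearest-neighbor graph on `ZMod n` associated to a permutation `σ`. -/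
def knnGraph (n k : ℕ) (σ : Equiv.Perm (ZMod n)) : SimpleGraph (ZMod n) where
  Adj u v := u ≠ v ∧ cycDist (σ.symm u) (σ.symm v) ≤ k
  symm := by
    constructor
    intro u v h
    refine ⟨h.1.symm, ?_⟩
    unfold cycDist at *
    omega
  loopless := by constructor; intro u h; exact h.1 rfl

/-- The set of all `2k`-NN graphs on `ZMod n`. -/
def knnGraphs (n k : ℕ) : Set (SimpleGraph (ZMod n)) := Set.range (knnGraph n k)

/-- The hidden `2k`-NN graph: the one associated to the identity permutation. -/
def xstar (n k : ℕ) : SimpleGraph (ZMod n) := knnGraph n k (Equiv.refl _)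

/-- Hamming distance between two graphs: the number of unordered pairs adjacent in
exactly one of them. -/
def gdist {n : ℕ} (x y : SimpleGraph (ZMod n)) : ℕ := (symmDiff x.edgeSet y.edgeSet).ncard

/-- `2k`-NN graphs at Hamming distance `2Δ` from the hidden one. -/
def XDelta (n k Δ : ℕ) : Set (SimpleGraph (ZMod n)) :=
  {x | x ∈ knnGraphs n k ∧ gdist x (xstar n k) = 2 * Δ}

open scoped Classical in
/-- The hidden `2k`-NN graph model: independent edge weights, with law `P` on the edges of
the hidden graph `x` and law `Q` elsewhere. -/
def edgeMeasure (n : ℕ) (P Q : Measure ℝ) (x : SimpleGraph (ZMod n)) :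
    Measure (Sym2 (ZMod n) → ℝ) :=
  if h : n = 0 then 0 else
    haveI : NeZero n := ⟨h⟩
    Measure.pi fun e => if e ∈ x.edgeSet then P else Q

/-- `⟨L, x⟩ = Σ_{e edge of x} log (dP/dQ)(w_e)`. -/
def score (n : ℕ) (P Q : Measure ℝ) (x : SimpleGraph (ZMod n))
    (w : Sym2 (ZMod n) → ℝ) : ℝ :=
  ∑ᶠ e ∈ x.edgeSet, llr P Q (w e)

/-- `Σ_{e edge of x} w_e`. -/
def wsum (n : ℕ) (x : SimpleGraph (ZMod n)) (w : Sym2 (ZMod n) → ℝ) : ℝ :=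
  ∑ᶠ e ∈ x.edgeSet, w e

/-- The order-1/2 Rényi divergence `α(P,Q) = -2 log ∫ √(dP/dQ) dQ`. -/
def renyiHalf (P Q : Measure ℝ) : ℝ :=
  -2 * Real.log (∫ t, Real.sqrt ((P.rnDeriv Q) t).toReal ∂Q)

/-- The Kullback-Leibler divergence `D(P‖Q) = ∫ log (dP/dQ) dP`. -/
def klDivR (P Q : Measure ℝ) : ℝ := ∫ t, llr P Q t ∂P

/-!
Every `2k`-NN graph `x = knnGraph n k σ` is isomorphic to `x*` via `σ`, and translations are
automorphisms of `x*`, so `x` and `x*` have the same degree at every vertex. Hence so do the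
deleted edges `R = x* \ x` and the added edges `A = x \ x*`; in particular `|R| = |A| = Δ`, and `x`
is determined by `(R, A)`. There are at most `C(kn, Δ)` choices of `R` and, for each of them, at
most `(2Δ - 1)!! ≤ 2^Δ Δ!` graphs `A` with the degrees of `R`, so `|X_Δ| ≤ (2kn)^Δ`.
-/

open Finset
open scoped Nat

lemma sdiff_sdiff_sup_sdiff_eq {α : Type*} [GeneralizedBooleanAlgebra α] (x y : α) :
    x \ (x \ y) ⊔ y \ x = y := by
  rw [sdiff_sdiff_right_self, inf_comm, sup_inf_sdiff]

namespace SimpleGraph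

variable {V : Type*}

/-- The right-hand side involves no `Fintype` instance: rewriting with this lemma identifies
degrees computed from different (classical) instances. -/
lemma degree_eq_ncard_neighborSet (G : SimpleGraph V) (v : V) [Fintype (G.neighborSet v)] :
    G.degree v = (G.neighborSet v).ncard := by
  rw [← card_neighborSet_eq_degree, Set.ncard_eq_toFinset_card', Set.toFinset_card]

lemma degree_edge_of_ne [DecidableEq V] {u y : V} (h : u ≠ y) (v : V)
    [Fintype ((edge u y).neighborSet v)] :
    (edge u y).degree v = (if v = u then 1 else 0) + (if v = y then 1 else 0) := by
  rw [degree_eq_ncard_neighborSet]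
  by_cases hu : v = u
  · subst hu
    have : (edge v y).neighborSet v = {y} := by ext; simp [edge_adj]; grind
    simp [this, h]
  by_cases hy : v = y
  · subst hy
    have : (edge u v).neighborSet v = {u} := by ext; simp [edge_adj]; grind
    simp [this, hu]
  · have : (edge u y).neighborSet v = ∅ := by ext; simp [edge_adj]; grind
    simp [this, hu, hy]

lemma degree_sdiff_add_degree_of_le {A B : SimpleGraph V} {v : V} [Fintype (A.neighborSet v)]
    [Fintype ((A \ B).neighborSet v)] [Fintype (B.neighborSet v)] (h : B ≤ A) :
    (A \ B).degree v + B.degree v = A.degree v := by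
  simp only [degree_eq_ncard_neighborSet, neighborSet_sdiff]
  exact Set.ncard_sdiff_add_ncard_of_subset (neighborSet_mono h v) (Set.toFinite _)

lemma degree_sdiff_eq_of_degree_eq {G H : SimpleGraph V} {v : V} [Fintype (G.neighborSet v)]
    [Fintype (H.neighborSet v)] [Fintype ((H \ G).neighborSet v)]
    [Fintype ((G \ H).neighborSet v)] (h : H.degree v = G.degree v) :
    (H \ G).degree v = (G \ H).degree v := by
  simp only [degree_eq_ncard_neighborSet, neighborSet_sdiff] at h ⊢
  exact (Set.ncard_eq_ncard_iff_ncard_sdiff_eq_ncard_sdiff (Set.toFinite _) (Set.toFinite _)).1 h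

lemma card_edgeFinset_eq_ncard_edgeSet (G : SimpleGraph V) [Fintype G.edgeSet] :
    #G.edgeFinset = G.edgeSet.ncard := by
  rw [← Set.ncard_coe_finset, coe_edgeFinset]

variable [Fintype V]

lemma ncard_symmDiff_edgeSet (G H : SimpleGraph V) :
    (symmDiff H.edgeSet G.edgeSet).ncard = (H \ G).edgeSet.ncard + (G \ H).edgeSet.ncard := by
  rw [Set.symmDiff_def, Set.ncard_union_eq disjoint_sdiff_sdiff, edgeSet_sdiff, edgeSet_sdiff]

lemma card_edgeFinset_eq_of_degree_eq [DecidableEq V] {G H : SimpleGraph V} [DecidableRel G.Adj]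
    [DecidableRel H.Adj] (h : ∀ v, H.degree v = G.degree v) :
    #H.edgeFinset = #G.edgeFinset := by
  have := H.sum_degrees_eq_twice_card_edges
  rw [funext h, G.sum_degrees_eq_twice_card_edges] at this
  omega

open Classical in
/-- Removing an edge `uy` at a fixed vertex `u` with `d u ≠ 0` leaves a graph with `m` edges, and
`y` is one of at most `2m + 1` vertices of positive prescribed degree. -/
theorem card_filter_degree_eq_le (m : ℕ) (d : V → ℕ) (hd : ∑ v, d v = 2 * m) :
    #{A : SimpleGraph V | ∀ v, A.degree v = d v} ≤ 2 ^ m * m ! := by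
  induction m generalizing d with
  | zero =>
    have hd0 : ∀ v, d v = 0 := by simpa using hd
    calc _ ≤ #({⊥} : Finset (SimpleGraph V)) := by
          refine card_le_card fun A hA => mem_singleton.2 ((eq_bot_iff_isIsolated A).2 fun v => ?_)
          simp only [mem_filter, mem_univ, true_and, hd0] at hA
          exact (degree_eq_zero ..).1 (hA v)
      _ = 2 ^ 0 * 0 ! := rfl
  | succ m ih =>
    obtain ⟨u, hu⟩ : ∃ u, d u ≠ 0 := by
      by_contra! h
      simp [h] at hd
    let I : Finset V := {y | y ≠ u ∧ d y ≠ 0}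
    let d' : V → V → ℕ := fun y v => d v - (edge u y).degree v
    have hcover : ({A | ∀ v, A.degree v = d v} : Finset (SimpleGraph V)) ⊆
        I.biUnion fun y =>
          ({A' | ∀ v, A'.degree v = d' y v} : Finset (SimpleGraph V)).image (· ⊔ edge u y) := by
      intro A hA
      simp only [mem_filter, mem_univ, true_and] at hA
      obtain ⟨y, huy⟩ := (A.degree_pos_iff_exists_adj u).1 (by rw [hA]; omega)
      have hy : d y ≠ 0 := by
        rw [← hA]; exact ((A.degree_pos_iff_exists_adj y).2 ⟨u, huy.symm⟩).ne'
      have hle : edge u y ≤ A := (edge_le_iff A).2 (Or.inr huy)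
      refine mem_biUnion.2 ⟨y, by simp [I, huy.ne.symm, hy], mem_image.2 ⟨A \ edge u y, ?_, ?_⟩⟩
      · simp only [mem_filter, mem_univ, true_and, d']
        intro v
        have := degree_sdiff_add_degree_of_le (v := v) hle
        rw [hA] at this
        simp only [degree_eq_ncard_neighborSet] at this ⊢
        omega
      · exact sdiff_sup_cancel hle
    have hsum : ∀ y ∈ I, ∑ v, d' y v = 2 * m := by
      intro y hy
      simp only [I, mem_filter, mem_univ, true_and] at hy
      have hdeg := degree_edge_of_ne hy.1.symm
      rw [sum_tsub_distrib _ fun v _ => by rw [hdeg]; split_ifs <;> simp_all <;> omega]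
      simp only [hdeg, sum_add_distrib, sum_ite_eq', mem_univ, if_true, hd]
      omega
    have hI : #I ≤ 2 * m + 1 := by
      have h1 : #I ≤ ∑ y ∈ I, d y := by
        rw [card_eq_sum_ones]
        exact sum_le_sum fun y hy => Nat.one_le_iff_ne_zero.2 (mem_filter.1 hy).2.2
      have h2 : ∑ y ∈ I, d y ≤ ∑ y ∈ univ.erase u, d y :=
        sum_le_sum_of_subset fun y hy => mem_erase.2 ⟨(mem_filter.1 hy).2.1, mem_univ y⟩
      have h3 := add_sum_erase univ d (mem_univ u)
      omega
    calc _ ≤ _ := card_le_card hcover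
      _ ≤ ∑ y ∈ I, 2 ^ m * m ! :=
          card_biUnion_le.trans (sum_le_sum fun y hy => card_image_le.trans (ih _ (hsum y hy)))
      _ ≤ (2 * m + 1) * (2 ^ m * m !) := by rw [sum_const, smul_eq_mul]; gcongr
      _ ≤ 2 ^ (m + 1) * (m + 1)! := by
          rw [pow_succ, Nat.factorial_succ]
          nlinarith [Nat.zero_le (2 ^ m * m !)]

open Classical in
lemma card_filter_le_and_card_edgeFinset_eq_le (G : SimpleGraph V) (Δ : ℕ) :
    #{R : SimpleGraph V | R ≤ G ∧ #R.edgeFinset = Δ} ≤ (#G.edgeFinset).choose Δ := by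
  rw [← card_powersetCard]
  refine card_le_card_of_injOn (fun R => R.edgeFinset) (fun R hR => ?_)
    fun R _ R' _ h => edgeFinset_inj.1 h
  simp only [coe_filter, mem_univ, true_and, Set.mem_ofPred_eq] at hR
  exact mem_powersetCard.2 ⟨edgeFinset_subset_edgeFinset.2 hR.1, hR.2⟩

open Classical in
lemma card_filter_degree_eq_and_sdiff_eq_le (G R : SimpleGraph V) :
    #{H : SimpleGraph V | (∀ v, H.degree v = G.degree v) ∧ G \ H = R} ≤
      #{A : SimpleGraph V | ∀ v, A.degree v = R.degree v} := by
  refine card_le_card_of_injOn (· \ G) (fun H hH => ?_) fun H hH H' hH' h => ?_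
  · simp only [coe_filter, mem_univ, true_and, Set.mem_ofPred_eq] at hH ⊢
    obtain ⟨hdeg, rfl⟩ := hH
    intro v
    have := degree_sdiff_eq_of_degree_eq (hdeg v)
    simp only [degree_eq_ncard_neighborSet] at this ⊢
    exact this
  · simp only [coe_filter, mem_univ, true_and, Set.mem_ofPred_eq] at hH hH'
    rw [← sdiff_sdiff_sup_sdiff_eq G H, ← sdiff_sdiff_sup_sdiff_eq G H', hH.2, hH'.2]
    exact congrArg _ h

open Classical in
theorem ncard_degree_eq_and_ncard_symmDiff_le (G : SimpleGraph V) (Δ : ℕ) :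
    {H : SimpleGraph V | (∀ v, H.degree v = G.degree v) ∧
      (symmDiff H.edgeSet G.edgeSet).ncard = 2 * Δ}.ncard ≤ (2 * #G.edgeFinset) ^ Δ := by
  set s : Finset (SimpleGraph V) := {H | (∀ v, H.degree v = G.degree v) ∧
      (symmDiff H.edgeSet G.edgeSet).ncard = 2 * Δ} with hs
  set S : Finset (SimpleGraph V) := {R | R ≤ G ∧ #R.edgeFinset = Δ}
  have hmaps : ∀ H ∈ s, G \ H ∈ S := by
    intro H hH
    simp only [s, S, mem_filter, mem_univ, true_and] at hH ⊢
    have hcard := card_edgeFinset_eq_of_degree_eq fun v => degree_sdiff_eq_of_degree_eq (hH.1 v)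
    have hsum := ncard_symmDiff_edgeSet G H
    simp only [card_edgeFinset_eq_ncard_edgeSet] at hcard ⊢
    exact ⟨sdiff_le, by omega⟩
  have hfiber : ∀ R ∈ S, #{H ∈ s | G \ H = R} ≤ 2 ^ Δ * Δ ! := by
    intro R hR
    simp only [S, mem_filter, mem_univ, true_and] at hR
    calc #{H ∈ s | G \ H = R}
        ≤ #{H : SimpleGraph V | (∀ v, H.degree v = G.degree v) ∧ G \ H = R} :=
          card_le_card fun H hH => by simp_all [s]
      _ ≤ #{A : SimpleGraph V | ∀ v, A.degree v = R.degree v} :=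
          card_filter_degree_eq_and_sdiff_eq_le G R
      _ ≤ 2 ^ Δ * Δ ! :=
          card_filter_degree_eq_le Δ _ (by rw [sum_degrees_eq_twice_card_edges, hR.2])
  set N := #G.edgeFinset
  rw [← coe_filter_univ, Set.ncard_coe_finset, ← hs]
  calc #s ≤ 2 ^ Δ * Δ ! * #S := card_le_mul_card_image_of_maps_to hmaps _ hfiber
    _ ≤ 2 ^ Δ * Δ ! * N.choose Δ := by
        gcongr; exact card_filter_le_and_card_edgeFinset_eq_le G Δ
    _ = 2 ^ Δ * N.descFactorial Δ := by rw [Nat.descFactorial_eq_factorial_mul_choose]; ring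
    _ ≤ 2 ^ Δ * N ^ Δ := by gcongr; exact Nat.descFactorial_le_pow N Δ
    _ = (2 * N) ^ Δ := (mul_pow 2 N Δ).symm

end SimpleGraph

def knnGraphIso (n k : ℕ) (σ : Equiv.Perm (ZMod n)) : xstar n k ≃g knnGraph n k σ where
  toEquiv := σ
  map_rel_iff' := by simp [knnGraph, xstar]

def xstarAddRight (n k : ℕ) (c : ZMod n) : xstar n k ≃g xstar n k where
  toEquiv := Equiv.addRight c
  map_rel_iff' := by simp [xstar, knnGraph, cycDist]

lemma degree_knnGraph {n : ℕ} [NeZero n] (k : ℕ) (σ : Equiv.Perm (ZMod n)) (v : ZMod n)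
    [Fintype ((knnGraph n k σ).neighborSet v)] [Fintype ((xstar n k).neighborSet v)] :
    (knnGraph n k σ).degree v = (xstar n k).degree v := by
  classical
  have h1 : (knnGraph n k σ).degree (σ (σ.symm v)) = (xstar n k).degree (σ.symm v) :=
    (knnGraphIso n k σ).degree_eq _
  have h2 : (xstar n k).degree (σ.symm v + (v - σ.symm v)) = (xstar n k).degree (σ.symm v) :=
    (xstarAddRight n k _).degree_eq _
  simp only [SimpleGraph.degree_eq_ncard_neighborSet, Equiv.apply_symm_apply, add_sub_cancel]
    at h1 h2 ⊢
  rw [h1, h2]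

lemma card_edgeFinset_xstar_le (n k : ℕ) [NeZero n] [Fintype (xstar n k).edgeSet] :
    #(xstar n k).edgeFinset ≤ k * n := by
  have key : ∀ a b : ZMod n, a ≠ b → (b - a).val ≤ k →
      s(a, b) ∈ (univ ×ˢ Icc 1 k).image fun p : ZMod n × ℕ => s(p.1, p.1 + p.2) := by
    intro a b hab h
    refine mem_image.2 ⟨(a, (b - a).val), ?_, by simp⟩
    simp [h, Nat.one_le_iff_ne_zero, sub_eq_zero, hab.symm]
  have hsub : (xstar n k).edgeFinset ⊆
      (univ ×ˢ Icc 1 k).image fun p : ZMod n × ℕ => s(p.1, p.1 + p.2) := by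
    intro e he
    induction e with
    | h u w =>
      rw [SimpleGraph.mem_edgeFinset, SimpleGraph.mem_edgeSet] at he
      obtain ⟨hne, hd⟩ := he
      simp only [cycDist, Equiv.refl_symm, Equiv.refl_apply] at hd
      rcases min_le_iff.1 hd with h | h
      · rw [Sym2.eq_swap]; exact key w u hne.symm h
      · exact key u w hne h
  calc #(xstar n k).edgeFinset ≤ _ := card_le_card hsub
    _ ≤ #(univ ×ˢ Icc 1 k) := card_image_le
    _ = k * n := by simp [mul_comm]

/-- **Simple counting bound (equation (6)/(8)).**
For all `1 ≤ k ≤ n` and all `Δ ≥ 0`, the number of `2k`-NN graphs at Hamming distance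
exactly `2Δ` from `x*` is at most `(4kn)^Δ`. -/
theorem card_XDelta_le_simple (n k Δ : ℕ) (hk : 1 ≤ k) (hkn : k ≤ n) :
    (XDelta n k Δ).ncard ≤ (4 * k * n) ^ Δ := by
  classical
  have : NeZero n := ⟨by omega⟩
  have hsub : XDelta n k Δ ⊆ {H | (∀ v, H.degree v = (xstar n k).degree v) ∧
      (symmDiff H.edgeSet (xstar n k).edgeSet).ncard = 2 * Δ} := by
    rintro _ ⟨⟨σ, rfl⟩, hdist⟩
    exact ⟨fun v => degree_knnGraph k σ v, hdist⟩
  calc (XDelta n k Δ).ncard ≤ _ := Set.ncard_le_ncard hsub (Set.toFinite _)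
    _ ≤ (2 * #(xstar n k).edgeFinset) ^ Δ :=
        SimpleGraph.ncard_degree_eq_and_ncard_symmDiff_le _ Δ
    _ ≤ (2 * (k * n)) ^ Δ := by gcongr; exact card_edgeFinset_xstar_le n k
    _ ≤ (4 * k * n) ^ Δ := Nat.pow_le_pow_left (by ring_nf; omega) Δ

end
end

section
/- Suppose k ≥ 2 and n > 2k. Let x ∈ X_{n,k}. Then for every red edge e of x there exists a red edge f of x with f ≠ e such that e and f are nearby, i.e., d(e, f) ≤ 2k, where for edges e = {i, ĩ} and f = {j, j̃} of x*, d(e, f) is the minimum of the four cyclic distances between an endpoint of e and an endpoint of f. -/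
open MeasureTheory Filter
open scoped ENNReal NNReal

noncomputable section

/-!
Write `τ = σ⁻¹`, so that `{u, v}` is an edge of `x` iff `cycDist (τ u) (τ v) ≤ k`, let
`e = {a, b}` and let `B` be the `k`-ball around `a`. If no red edge other than `e` has an
endpoint within `2k` of `a`, then every vertex `v ∉ e` within `2k` of `a` keeps all its
`x*`-neighbours; as all `k`-balls have the same size, `τ` then maps the `k`-ball around `v`
onto the one around `τ v`. Applied to the `v ∈ B \ {a, b}`, this shows that the
`x`-neighbourhood `S` of `a` (the preimage under `τ` of the `k`-ball around `τ a`) is `B \ {b}`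
plus one vertex `w ∉ B`. As `k ≥ 2`, some point of the `k`-ball around `τ a` other than `τ a`
and `τ w` is within `k` of `τ w`; it is `τ v` with `v ∈ S \ {a, w} ⊆ B \ {a, b}`, so `w` is
within `k` of `v`, hence within `2k` of `a`. Then `w` keeps its neighbours too, and `w ∈ S`
forces `w ∈ B`.
-/

section

open ZMod Finset

variable {n : ℕ}

lemma ZMod.intCast_ne_zero_of_natAbs_lt {j : ℤ} (hj : j ≠ 0) (hjn : j.natAbs < n) :
    (j : ZMod n) ≠ 0 := fun h =>
  hj <| Int.natAbs_eq_zero.1 <|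
    Nat.eq_zero_of_dvd_of_lt (Int.natCast_dvd.1 ((intCast_zmod_eq_zero_iff_dvd j n).1 h)) hjn

lemma cycDist_comm (u v : ZMod n) : cycDist u v = cycDist v u :=
  Nat.min_comm _ _

@[simp]
lemma cycDist_self (u : ZMod n) : cycDist u u = 0 := by
  simp [cycDist]

lemma cycDist_add_right (u v c : ZMod n) : cycDist (u + c) (v + c) = cycDist u v := by
  simp [cycDist]

lemma cycDist_eq_natAbs_valMinAbs [NeZero n] (u v : ZMod n) :
    cycDist u v = (v - u).valMinAbs.natAbs := by
  rw [valMinAbs_natAbs_eq_min, cycDist_comm, cycDist, ← neg_sub v u, neg_val']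
  have := (v - u).val_lt
  rcases Nat.eq_zero_or_pos (v - u).val with h | h
  · simp [h]
  · rw [Nat.mod_eq_of_lt (by omega)]

lemma cycDist_triangle [NeZero n] (u v w : ZMod n) :
    cycDist u w ≤ cycDist u v + cycDist v w := by
  simp only [cycDist_eq_natAbs_valMinAbs]
  calc (w - u).valMinAbs.natAbs = ((v - u) + (w - v)).valMinAbs.natAbs := by
        rw [sub_add_sub_cancel']
    _ ≤ ((v - u).valMinAbs + (w - v).valMinAbs).natAbs := natAbs_valMinAbs_add_le _ _
    _ ≤ _ := Int.natAbs_add_le _ _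

lemma cycDist_le_iff_exists [NeZero n] {u v : ZMod n} {κ : ℕ} :
    cycDist u v ≤ κ ↔ ∃ j : ℤ, j.natAbs ≤ κ ∧ v = u + j := by
  rw [cycDist_eq_natAbs_valMinAbs]
  constructor
  · exact fun h => ⟨_, h, by rw [coe_valMinAbs, add_sub_cancel]⟩
  · rintro ⟨j, hj, rfl⟩
    refine le_trans (natAbs_min_of_le_div_two n _ j ?_ (natAbs_valMinAbs_le _)) hj
    rw [coe_valMinAbs, add_sub_cancel_left]

lemma exists_ne_cycDist_le_of_cycDist_le [NeZero n] {k : ℕ} (hk : 2 ≤ k) (hkn : k < n)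
    {p r : ZMod n} (hpr : p ≠ r) (hd : cycDist p r ≤ k) :
    ∃ q, q ≠ p ∧ q ≠ r ∧ cycDist p q ≤ k ∧ cycDist q r ≤ k := by
  obtain ⟨s, hs, rfl⟩ := cycDist_le_iff_exists.1 hd
  have hs0 : s ≠ 0 := by rintro rfl; simp at hpr
  obtain ⟨t, ht0, hts, ht, hst⟩ :
      ∃ t : ℤ, t ≠ 0 ∧ t ≠ s ∧ t.natAbs ≤ k ∧ (s - t).natAbs < k := by
    rcases lt_trichotomy s 1 with hs1 | rfl | hs1
    · rcases lt_trichotomy s (-1) with hs2 | rfl | hs2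
      · exact ⟨-1, by omega⟩
      · exact ⟨-2, by omega⟩
      · omega
    · exact ⟨2, by omega⟩
    · exact ⟨1, by omega⟩
  refine ⟨p + t, ?_, ?_, cycDist_le_iff_exists.2 ⟨t, ht, rfl⟩,
    cycDist_le_iff_exists.2 ⟨s - t, hst.le, by push_cast; ring⟩⟩
  · simpa using intCast_ne_zero_of_natAbs_lt ht0 (by omega)
  · intro h
    have : ((s - t : ℤ) : ZMod n) = 0 := by push_cast; linear_combination -h
    exact intCast_ne_zero_of_natAbs_lt (sub_ne_zero.2 hts.symm) (by omega) this

lemma Finset.exists_notMem_eq_insert_erase_of_card_eq {α : Type*} [DecidableEq α]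
    {s t : Finset α} {b : α} (hcard : #t = #s) (hbs : b ∈ s) (hbt : b ∉ t)
    (hst : s.erase b ⊆ t) : ∃ w ∉ s, t = insert w (s.erase b) := by
  have hcard' : #t = #(s.erase b) + 1 := by rw [hcard, card_erase_add_one hbs]
  obtain ⟨w, hwt, hw⟩ := exists_mem_notMem_of_card_lt_card (s := s.erase b) (t := t) (by omega)
  refine ⟨w, fun hws => hw (mem_erase.2 ⟨?_, hws⟩), ?_⟩
  · rintro rfl
    exact hbt hwt
  · exact (eq_of_subset_of_card_le (insert_subset hwt hst)
      (by rw [card_insert_of_notMem hw, hcard'])).symm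

def cycBall [NeZero n] (k : ℕ) (v : ZMod n) : Finset (ZMod n) := {u | cycDist v u ≤ k}

@[simp]
lemma mem_cycBall [NeZero n] {k : ℕ} {u v : ZMod n} :
    u ∈ cycBall k v ↔ cycDist v u ≤ k := by
  simp [cycBall]

lemma card_cycBall_eq [NeZero n] (k : ℕ) (u v : ZMod n) : #(cycBall k u) = #(cycBall k v) := by
  have : cycBall k v = (cycBall k u).map (Equiv.addRight (v - u)).toEmbedding := by
    ext w
    rw [mem_map_equiv, mem_cycBall, mem_cycBall, ← cycDist_add_right u _ (v - u)]
    simp [add_assoc]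
  rw [this, card_map]

lemma cycDist_perm_le_iff_of_forall_le [NeZero n] {k : ℕ} (τ : Equiv.Perm (ZMod n)) {v : ZMod n}
    (h : ∀ u, cycDist v u ≤ k → cycDist (τ v) (τ u) ≤ k) (u : ZMod n) :
    cycDist (τ v) (τ u) ≤ k ↔ cycDist v u ≤ k := by
  have hmap : (cycBall k v).map τ.toEmbedding = cycBall k (τ v) := by
    refine eq_of_subset_of_card_le (fun w hw => ?_) (by rw [card_map, card_cycBall_eq])
    rw [mem_map_equiv, mem_cycBall] at hw
    simpa using h _ hw
  rw [← mem_cycBall, ← hmap, mem_map_equiv, Equiv.symm_apply_apply, mem_cycBall]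

lemma exists_stretched_pair_near_of_stretched [NeZero n] {k : ℕ} (hk : 2 ≤ k) (hkn : k < n)
    (τ : Equiv.Perm (ZMod n)) {a b : ZMod n} (hd : cycDist a b ≤ k)
    (hτ : k < cycDist (τ a) (τ b)) :
    ∃ v, v ≠ a ∧ v ≠ b ∧ cycDist a v ≤ 2 * k ∧
      ∃ u, cycDist v u ≤ k ∧ k < cycDist (τ v) (τ u) := by
  by_contra! hfar
  replace hfar : ∀ v, v ≠ a → v ≠ b → cycDist a v ≤ 2 * k →
      ∀ u, cycDist (τ v) (τ u) ≤ k ↔ cycDist v u ≤ k :=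
    fun v hva hvb hav => cycDist_perm_le_iff_of_forall_le τ (hfar v hva hvb hav)
  set S := (cycBall k (τ a)).map τ.symm.toEmbedding
  have mem_S (u : ZMod n) : u ∈ S ↔ cycDist (τ a) (τ u) ≤ k := by simp [S, mem_map_equiv]
  have hsub : (cycBall k a).erase b ⊆ S := by
    intro u hu
    rw [mem_erase, mem_cycBall] at hu
    rw [mem_S]
    rcases eq_or_ne u a with rfl | hua
    · simp
    · rw [cycDist_comm, hfar u hua hu.1 (by omega), cycDist_comm]
      exact hu.2
  obtain ⟨w, hwa, hS⟩ := exists_notMem_eq_insert_erase_of_card_eq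
    (by rw [card_map, card_cycBall_eq]) (by simpa using hd) (by rw [mem_S]; omega) hsub
  have hwS : w ∈ S := hS ▸ mem_insert_self _ _
  have hw_ne_a : w ≠ a := by rintro rfl; simp at hwa
  have hw_ne_b : w ≠ b := by rintro rfl; simp [hd] at hwa
  obtain ⟨q, hqa, hqw, haq, hqw'⟩ := exists_ne_cycDist_le_of_cycDist_le hk hkn
    (τ.injective.ne hw_ne_a.symm) ((mem_S w).1 hwS)
  set v := τ.symm q
  have hvS : v ∈ S := by rw [mem_S, τ.apply_symm_apply]; exact haq
  rw [hS, mem_insert, mem_erase, mem_cycBall] at hvS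
  obtain ⟨hvb, hav⟩ := hvS.resolve_left (by rintro rfl; simp [v] at hqw)
  have hva : v ≠ a := by rintro rfl; simp [v] at hqa
  have hvw : cycDist v w ≤ k := (hfar v hva hvb (by omega) w).1 (by simpa [v] using hqw')
  have haw : cycDist a w ≤ 2 * k := (cycDist_triangle a v w).trans (by omega)
  refine hwa (mem_cycBall.2 ?_)
  rw [cycDist_comm, ← hfar w hw_ne_a hw_ne_b haw, cycDist_comm]
  exact (mem_S w).1 hwS

end

/-- **Lemma 3 (every red edge has a nearby red edge).**
Suppose `k ≥ 2` and `n > 2k`, and let `x` be a `2k`-NN graph. Then for every red edge `e`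
of `x` (an edge of `x*` that is not an edge of `x`) there is a different red edge `f`
that is nearby, i.e. some endpoint of `e` and some endpoint of `f` are at cyclic distance
at most `2k`. -/
theorem red_edge_has_nearby_red_edge (n k : ℕ) (hk : 2 ≤ k) (hn : 2 * k < n)
    (x : SimpleGraph (ZMod n)) (hx : x ∈ knnGraphs n k)
    (e : Sym2 (ZMod n)) (he : e ∈ (xstar n k).edgeSet \ x.edgeSet) :
    ∃ f ∈ (xstar n k).edgeSet \ x.edgeSet, f ≠ e ∧
      ∃ u v : ZMod n, u ∈ e ∧ v ∈ f ∧ cycDist u v ≤ 2 * k := by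
  have : NeZero n := ⟨by omega⟩
  obtain ⟨σ, rfl⟩ := hx
  induction e using Sym2.ind with | h a b => ?_
  obtain ⟨⟨hab, hd⟩, hnot⟩ := he
  have hσ : k < cycDist (σ.symm a) (σ.symm b) := not_le.1 fun h => hnot ⟨hab, h⟩
  obtain ⟨v, hva, hvb, hav, u, hvu, hσvu⟩ :=
    exists_stretched_pair_near_of_stretched hk (by omega) σ.symm hd hσ
  have hvu_ne : v ≠ u := by rintro rfl; simp at hσvu
  refine ⟨s(v, u), ⟨⟨hvu_ne, hvu⟩, fun h => absurd h.2 (not_le.2 hσvu)⟩, ?_,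
    a, v, by simp, by simp, hav⟩
  rw [Ne, Sym2.eq_iff]
  tauto

end
end

section
/- Let n ≥ 2k + 2 and k ≥ 1, fix i ∈ ZMod n, and let σ be the permutation of ZMod n with σ(i) = i + 1, σ(i + 1) = i, and σ(j) = j for all other j. Then the edges of x* that are not edges of x(σ) are exactly the two pairs {i − k, i} and {i + 1, i + k + 1}, and the edges of x(σ) that are not edges of x* are exactly the two pairs {i − k, i + 1} and {i, i + k + 1}; in particular the Hamming distance d(x(σ), x*) equals 4. -/
open MeasureTheory Filter
open scoped ENNReal NNReal

noncomputable section

/-!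
The graph `x(σ)` is `x*` pulled back along the transposition `σ = (i i+1)`, so the only edges
that change are those with exactly one endpoint in `{i, i+1}`: `{i, w}` is lost and `{i+1, w}`
gained exactly when `w` is a neighbour of `i` but not of `i+1`, and symmetrically. Neighbours in
`x*` are the vertices `u + j` with `|j| ≤ k`, and since `2k + 2 ≤ n` the offsets in `[-k, k+1]`
name distinct vertices; so the only such private neighbours are `i - k` and `i + k + 1`.
-/

namespace SimpleGraph

variable {V : Type*} [DecidableEq V] (G : SimpleGraph V) (a b : V)

theorem edgeSet_sdiff_edgeSet_comap_swap :
    G.edgeSet \ (G.comap (Equiv.swap a b)).edgeSet =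
      (fun w => s(a, w)) '' (G.neighborSet a \ insert b (G.neighborSet b)) ∪
      (fun w => s(b, w)) '' (G.neighborSet b \ insert a (G.neighborSet a)) := by
  ext ⟨u, v⟩
  simp only [Set.mem_sdiff, mem_edgeSet, comap_adj, Set.mem_union, Set.mem_image,
    mem_neighborSet, Set.mem_insert_iff, Sym2.eq_iff]
  grind [G.adj_symm, G.ne_of_adj]

theorem edgeSet_comap_swap_sdiff_edgeSet :
    (G.comap (Equiv.swap a b)).edgeSet \ G.edgeSet =
      (fun w => s(a, w)) '' (G.neighborSet b \ insert a (G.neighborSet a)) ∪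
      (fun w => s(b, w)) '' (G.neighborSet a \ insert b (G.neighborSet b)) := by
  ext ⟨u, v⟩
  simp only [Set.mem_sdiff, mem_edgeSet, comap_adj, Set.mem_union, Set.mem_image,
    mem_neighborSet, Set.mem_insert_iff, Sym2.eq_iff]
  grind [G.adj_symm, G.ne_of_adj]

end SimpleGraph

theorem ZMod.eq_of_add_intCast_eq_add_intCast {n : ℕ} {u : ZMod n} {a b : ℤ}
    (h : u + (a : ZMod n) = u + b) (hab : a < b + n) (hba : b < a + n) : a = b := by
  rw [add_right_inj, ← sub_eq_zero, ← Int.cast_sub, ZMod.intCast_zmod_eq_zero_iff_dvd] at h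
  exact sub_eq_zero.1 <| Int.eq_zero_of_abs_lt_dvd h <| abs_sub_lt_iff.2 ⟨by omega, by omega⟩

theorem cycDist_le_iff {n k : ℕ} (hkn : k < n) (u v : ZMod n) :
    cycDist u v ≤ k ↔ ∃ j : ℤ, |j| ≤ k ∧ v = u + j := by
  have : NeZero n := ⟨by omega⟩
  rw [cycDist, min_le_iff]
  constructor
  · rintro (h | h)
    · refine ⟨-(u - v).val, by rw [abs_neg, Nat.abs_cast]; exact_mod_cast h, ?_⟩
      push_cast [ZMod.natCast_zmod_val]
      ring
    · refine ⟨(v - u).val, by rw [Nat.abs_cast]; exact_mod_cast h, ?_⟩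
      push_cast [ZMod.natCast_zmod_val]
      ring
  · rintro ⟨j, hj, rfl⟩
    obtain ⟨m, rfl | rfl⟩ := Int.eq_nat_or_neg j
    all_goals replace hj : m ≤ k := by simpa using hj
    · right
      rw [Int.cast_natCast, add_sub_cancel_left, ZMod.val_natCast_of_lt (by omega)]
      exact hj
    · left
      rw [Int.cast_neg, Int.cast_natCast, sub_add_cancel_left, neg_neg,
        ZMod.val_natCast_of_lt (by omega)]
      exact hj

theorem xstar_adj_iff {n k : ℕ} (hkn : k < n) (u v : ZMod n) :
    (xstar n k).Adj u v ↔ u ≠ v ∧ ∃ j : ℤ, |j| ≤ k ∧ v = u + j :=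
  and_congr_right fun _ => cycDist_le_iff hkn u v

theorem knnGraph_eq_comap (n k : ℕ) (σ : Equiv.Perm (ZMod n)) :
    knnGraph n k σ = (xstar n k).comap σ.symm := by
  ext u v
  simp [knnGraph, xstar]

theorem xstar_neighborSet_sdiff_succ {n k : ℕ} (hk : 1 ≤ k) (hn : 2 * k + 2 ≤ n)
    (i : ZMod n) :
    (xstar n k).neighborSet i \ insert (i + 1) ((xstar n k).neighborSet (i + 1)) = {i - k} := by
  ext w
  simp only [Set.mem_sdiff, SimpleGraph.mem_neighborSet, Set.mem_insert_iff,
    Set.mem_singleton_iff, xstar_adj_iff (show k < n by omega), not_or, not_and, not_exists]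
  constructor
  · rintro ⟨⟨-, j, hj, rfl⟩, hne, hfar⟩
    have : j = -k := by
      by_contra hj'
      exact hfar (Ne.symm hne) (j - 1) (by rw [abs_le] at hj ⊢; omega) (by push_cast; ring)
    rw [this]; push_cast; ring
  · rintro rfl
    refine ⟨⟨fun h => ?_, -k, by simp, by push_cast; ring⟩, fun h => ?_, fun _ j hj h => ?_⟩
    · have := ZMod.eq_of_add_intCast_eq_add_intCast (a := 0) (b := -k)
        (by push_cast; linear_combination h)
      omega
    · have := ZMod.eq_of_add_intCast_eq_add_intCast (a := -k) (b := 1)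
        (by push_cast; linear_combination h)
      omega
    · rw [abs_le] at hj
      have := ZMod.eq_of_add_intCast_eq_add_intCast (a := -k) (b := 1 + j)
        (by push_cast; linear_combination h)
      omega

theorem xstar_neighborSet_succ_sdiff {n k : ℕ} (hk : 1 ≤ k) (hn : 2 * k + 2 ≤ n)
    (i : ZMod n) :
    (xstar n k).neighborSet (i + 1) \ insert i ((xstar n k).neighborSet i) = {i + k + 1} := by
  ext w
  simp only [Set.mem_sdiff, SimpleGraph.mem_neighborSet, Set.mem_insert_iff,
    Set.mem_singleton_iff, xstar_adj_iff (show k < n by omega), not_or, not_and, not_exists]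
  constructor
  · rintro ⟨⟨-, j, hj, rfl⟩, hne, hfar⟩
    have : j = k := by
      by_contra hj'
      exact hfar (Ne.symm hne) (j + 1) (by rw [abs_le] at hj ⊢; omega) (by push_cast; ring)
    rw [this]; push_cast; ring
  · rintro rfl
    refine ⟨⟨fun h => ?_, k, by simp, by push_cast; ring⟩, fun h => ?_, fun _ j hj h => ?_⟩
    · have := ZMod.eq_of_add_intCast_eq_add_intCast (a := 1) (b := k + 1)
        (by push_cast; linear_combination h)
      omega
    · have := ZMod.eq_of_add_intCast_eq_add_intCast (a := k + 1) (b := 0)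
        (by push_cast; linear_combination h)
      omega
    · rw [abs_le] at hj
      have := ZMod.eq_of_add_intCast_eq_add_intCast (a := k + 1) (b := j)
        (by push_cast; linear_combination h)
      omega

/-- **The difference graph of an adjacent transposition (Section 2.2).**
For `n ≥ 2k+2`, swapping the adjacent vertices `i` and `i+1` on the hidden Hamiltonian
cycle produces a `2k`-NN graph whose red edges (edges of `x*` lost) are exactly
`{i-k, i}` and `{i+1, i+k+1}`, whose blue edges (new edges) are exactly `{i-k, i+1}` and
`{i, i+k+1}`; in particular the Hamming distance to `x*` is `4`. -/
theorem swap_difference_graph (n k : ℕ) (hk : 1 ≤ k) (hn : 2 * k + 2 ≤ n) (i : ZMod n) :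
    (xstar n k).edgeSet \ (knnGraph n k (Equiv.swap i (i + 1))).edgeSet
        = {s(i - (k : ZMod n), i), s(i + 1, i + (k : ZMod n) + 1)} ∧
    (knnGraph n k (Equiv.swap i (i + 1))).edgeSet \ (xstar n k).edgeSet
        = {s(i - (k : ZMod n), i + 1), s(i, i + (k : ZMod n) + 1)} ∧
    gdist (knnGraph n k (Equiv.swap i (i + 1))) (xstar n k) = 4 := by
  have hσ : knnGraph n k (Equiv.swap i (i + 1)) = (xstar n k).comap (Equiv.swap i (i + 1)) := by
    rw [knnGraph_eq_comap, Equiv.symm_swap]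
  have hleft := xstar_neighborSet_sdiff_succ hk hn i
  have hright := xstar_neighborSet_succ_sdiff hk hn i
  have hred : (xstar n k).edgeSet \ (knnGraph n k (Equiv.swap i (i + 1))).edgeSet
      = {s(i - (k : ZMod n), i), s(i + 1, i + (k : ZMod n) + 1)} := by
    rw [hσ, SimpleGraph.edgeSet_sdiff_edgeSet_comap_swap, hleft, hright, Set.image_singleton,
      Set.image_singleton, Set.singleton_union, Sym2.eq_swap]
  have hblue : (knnGraph n k (Equiv.swap i (i + 1))).edgeSet \ (xstar n k).edgeSet
      = {s(i - (k : ZMod n), i + 1), s(i, i + (k : ZMod n) + 1)} := by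
    rw [hσ, SimpleGraph.edgeSet_comap_swap_sdiff_edgeSet, hleft, hright, Set.image_singleton,
      Set.image_singleton, Set.union_singleton, Sym2.eq_swap]
  refine ⟨hred, hblue, ?_⟩
  have hsucc : i ≠ i + 1 := by
    have : Nontrivial (ZMod n) := ZMod.nontrivial_iff.2 (by omega)
    simp
  have hik : i ≠ i - k := ((xstar n k).mem_neighborSet _ _).1 (hleft.ge rfl).1 |>.ne
  have hki : i + k + 1 ≠ i := fun h => (hright.ge rfl).2 (Or.inl h)
  rw [gdist, Set.symmDiff_def, Set.ncard_union_eq disjoint_sdiff_sdiff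
    (hblue ▸ Set.toFinite _) (hred ▸ Set.toFinite _), hblue, hred]
  rw [Set.ncard_pair, Set.ncard_pair] <;> grind [Sym2.eq_iff]

end
end

section
/- Let n ≥ 4k + 4 and k ≥ 1. For an integer i with k + 1 ≤ i ≤ n − k − 1, let S_i denote the four-element set of unordered pairs { {i − k, i}, {i + 1, i + k + 1}, {i − k, i + 1}, {i, i + k + 1} } of elements of ZMod n (the edge set of the difference graph of the 2k-NN graph obtained from the identity by swapping i and i + 1). Then for integers i, j with k + 1 ≤ i < j ≤ n − k − 1, the sets S_i and S_j intersect if and only if j − i ∈ {k, k + 1}. -/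
open MeasureTheory Filter
open scoped ENNReal NNReal

noncomputable section

/-- The edge set of the difference graph of the `2k`-NN graph obtained from the identity
by swapping `i` and `i+1`: the four pairs `{i-k,i}, {i+1,i+k+1}, {i-k,i+1}, {i,i+k+1}`. -/
def swapDiffEdges (n k i : ℕ) : Set (Sym2 (ZMod n)) :=
  {s((i : ZMod n) - (k : ZMod n), (i : ZMod n)),
   s((i : ZMod n) + 1, (i : ZMod n) + (k : ZMod n) + 1),
   s((i : ZMod n) - (k : ZMod n), (i : ZMod n) + 1),
   s((i : ZMod n), (i : ZMod n) + (k : ZMod n) + 1)}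

/-!
All endpoints of the pairs in `S_i` and `S_j` are among `1, …, n`, on which the cast `ℤ → ZMod n`
is injective, so the question can be settled in `ℤ`. There `S_i` consists of two pairs of
length `k`, with lower endpoints `i - k` and `i + 1`, and two of length `k + 1`, with lower
endpoints `i - k` and `i`. A pair is determined by its length and lower endpoint, so for `i < j`
the only coincidences are `i + 1 = j - k` and `i = j - k`.
-/

theorem Set.InjOn.sym2_map {α β : Type*} {f : α → β} {s : Set α} (hf : Set.InjOn f s) :
    Set.InjOn (Sym2.map f) s.sym2 := by
  rintro ⟨a, b⟩ hab ⟨c, d⟩ hcd h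
  simp only [Set.mk_mem_sym2_iff, Sym2.map_mk, Sym2.eq_iff] at hab hcd h ⊢
  rcases h with ⟨h₁, h₂⟩ | ⟨h₁, h₂⟩
  · exact Or.inl ⟨hf hab.1 hcd.1 h₁, hf hab.2 hcd.2 h₂⟩
  · exact Or.inr ⟨hf hab.1 hcd.2 h₁, hf hab.2 hcd.1 h₂⟩

theorem ZMod.intCast_injOn_Ico (n : ℕ) (a : ℤ) :
    Set.InjOn ((↑) : ℤ → ZMod n) (Set.Ico a (a + n)) := by
  rintro x ⟨hx₁, hx₂⟩ y ⟨hy₁, hy₂⟩ h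
  have hdvd := (ZMod.intCast_eq_intCast_iff_dvd_sub x y n).mp h
  have := Int.eq_zero_of_abs_lt_dvd hdvd (abs_sub_lt_iff.mpr ⟨by omega, by omega⟩)
  omega

def swapDiffPairs {R : Type*} [Ring R] (k i : R) : Set (Sym2 R) :=
  {s(i - k, i), s(i + 1, i + k + 1), s(i - k, i + 1), s(i, i + k + 1)}

theorem sym2Map_image_swapDiffPairs {R S : Type*} [Ring R] [Ring S] (f : R →+* S) (k i : R) :
    Sym2.map f '' swapDiffPairs k i = swapDiffPairs (f k) (f i) := by
  simp [swapDiffPairs, Set.image_insert_eq]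

theorem swapDiffEdges_eq_image (n k i : ℕ) :
    swapDiffEdges n k i = Sym2.map ((↑) : ℤ → ZMod n) '' swapDiffPairs (k : ℤ) i := by
  change _ = Sym2.map (Int.castRingHom (ZMod n)) '' _
  rw [sym2Map_image_swapDiffPairs]
  simp [swapDiffEdges, swapDiffPairs]

theorem swapDiffPairs_subset_sym2 {k i : ℤ} {s : Set ℤ} (hk : 0 ≤ k)
    (hs : Set.Icc (i - k) (i + k + 1) ⊆ s) : swapDiffPairs k i ⊆ s.sym2 := by
  have mem : ∀ x, i - k ≤ x → x ≤ i + k + 1 → x ∈ s := fun x h₁ h₂ => hs ⟨h₁, h₂⟩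
  simp only [swapDiffPairs, Set.insert_subset_iff, Set.singleton_subset_iff,
    Set.mk_mem_sym2_iff]
  refine ⟨⟨?_, ?_⟩, ⟨?_, ?_⟩, ⟨?_, ?_⟩, ⟨?_, ?_⟩⟩ <;> apply mem <;> omega

theorem swapDiffPairs_inter_nonempty_iff {k i j : ℤ} (hk : 0 ≤ k) (hij : i < j) :
    (swapDiffPairs k i ∩ swapDiffPairs k j).Nonempty ↔ j - i = k ∨ j - i = k + 1 := by
  constructor
  · rintro ⟨e, hei, hej⟩
    simp only [swapDiffPairs, Set.mem_insert_iff, Set.mem_singleton_iff] at hei hej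
    rcases hei with rfl | rfl | rfl | rfl <;>
      rcases hej with h | h | h | h <;> rw [Sym2.eq_iff] at h <;> omega
  · rintro (h | h)
    · obtain rfl : j = i + k := by omega
      refine ⟨s(i, i + k + 1), Or.inr (Or.inr (Or.inr rfl)), Or.inr (Or.inr (Or.inl ?_))⟩
      rw [add_sub_cancel_right]
    · obtain rfl : j = i + k + 1 := by omega
      refine ⟨s(i + 1, i + k + 1), Or.inr (Or.inl rfl), Or.inl ?_⟩
      rw [show i + k + 1 - k = i + 1 by ring]

theorem swapDiffEdges_intersect_iff_general (n k : ℕ)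
    (i j : ℕ) (hi : k + 1 ≤ i) (hij : i < j) (hj : j ≤ n - k - 1) :
    (swapDiffEdges n k i ∩ swapDiffEdges n k j).Nonempty ↔ j - i = k ∨ j - i = k + 1 := by
  have hsub : ∀ m : ℕ, k + 1 ≤ m → m + k + 1 ≤ n →
      swapDiffPairs (k : ℤ) m ⊆ (Set.Ico (1 : ℤ) (1 + n)).sym2 := fun m hm₁ hm₂ =>
    swapDiffPairs_subset_sym2 (by omega) fun x ⟨hx₁, hx₂⟩ => ⟨by omega, by omega⟩
  have hinj := (ZMod.intCast_injOn_Ico n 1).sym2_map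
  rw [swapDiffEdges_eq_image, swapDiffEdges_eq_image,
    ← hinj.image_inter (hsub i hi (by omega)) (hsub j (by omega) (by omega)), Set.image_nonempty,
    swapDiffPairs_inter_nonempty_iff (by omega) (by exact_mod_cast hij)]
  omega

/-- **Intersection pattern of the difference graphs of adjacent transpositions
(Section 2.2).** For `n ≥ 4k+4` and `k+1 ≤ i < j ≤ n-k-1`, the edge sets `S_i` and `S_j`
intersect if and only if `j - i ∈ {k, k+1}`. -/
theorem swapDiffEdges_intersect_iff (n k : ℕ) (hk : 1 ≤ k) (hn : 4 * k + 4 ≤ n)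
    (i j : ℕ) (hi : k + 1 ≤ i) (hij : i < j) (hj : j ≤ n - k - 1) :
    (swapDiffEdges n k i ∩ swapDiffEdges n k j).Nonempty ↔ j - i = k ∨ j - i = k + 1 :=
  swapDiffEdges_intersect_iff_general n k i j hi hij hj

end
end

section
/- Let P and Q be mutually absolutely continuous Borel probability measures on ℝ and let α = −2 log ∫ √(dP/dQ) dQ. Let Δ ≥ 1 and let X_1, …, X_Δ, Y_1, …, Y_Δ be mutually independent real random variables such that each X_i has the law of log(dP/dQ) under P and each Y_i has the law of log(dP/dQ) under Q. Then P( Σ_{i=1}^Δ Y_i − Σ_{i=1}^Δ X_i ≥ 0 ) ≤ exp(−α Δ). -/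
open MeasureTheory Filter
open scoped ENNReal NNReal

noncomputable section

/-! Chernoff's bound at exponent `1/2`. Writing `L = log (dP/dQ)`, the change of measure
`dP = e^L dQ` gives `E_P[e^{-L/2}] = E_Q[e^{L/2}] = ∫ √(dP/dQ) dQ = e^{-α/2}`, so by independence
the moment generating function of `Σ Y_i - Σ X_i` at `1/2` is `e^{-αΔ}`, and Markov's inequality
for `exp ((Σ Y_i - Σ X_i) / 2)` gives the bound. -/

open ProbabilityTheory Real

section Independent

variable {ι Ω : Type*} [MeasurableSpace Ω] {μ : Measure Ω} {X : ι → Ω → ℝ} {t : ℝ}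

theorem ProbabilityTheory.iIndepFun.integrable_exp_mul_sum₀ (h_indep : iIndepFun X μ)
    (h_meas : ∀ i, AEMeasurable (X i) μ) {s : Finset ι}
    (h_int : ∀ i ∈ s, Integrable (fun ω => exp (t * X i ω)) μ) :
    Integrable (fun ω => exp (t * (∑ i ∈ s, X i) ω)) μ := by
  have := h_indep.isProbabilityMeasure
  have h_ae : ∀ i, X i =ᵐ[μ] (h_meas i).mk := fun i => (h_meas i).ae_eq_mk
  have h_int_mk : Integrable (fun ω => exp (t * (∑ i ∈ s, (h_meas i).mk) ω)) μ :=
    (h_indep.congr h_ae).integrable_exp_mul_sum (fun i => (h_meas i).measurable_mk)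
      fun i hi => (h_int i hi).congr <| by
        filter_upwards [h_ae i] with ω hω
        rw [hω]
  refine h_int_mk.congr ?_
  filter_upwards [(eventually_all_finset s).2 fun i _ => h_ae i] with ω hω
  simp only [Finset.sum_apply]
  rw [Finset.sum_congr rfl fun i hi => (hω i hi).symm]

theorem ProbabilityTheory.iIndepFun.measureReal_sum_ge_le_exp_mul_prod_mgf
    (h_indep : iIndepFun X μ) (h_meas : ∀ i, AEMeasurable (X i) μ) (s : Finset ι) (ε : ℝ)
    (ht : 0 ≤ t)    (h_int : ∀ i ∈ s, Integrable (fun ω => exp (t * X i ω)) μ) :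
    μ.real {ω | ε ≤ ∑ i ∈ s, X i ω} ≤ exp (-t * ε) * ∏ i ∈ s, mgf (X i) μ t := by
  have := h_indep.isProbabilityMeasure
  have h := measure_ge_le_exp_mul_mgf ε ht (h_indep.integrable_exp_mul_sum₀ h_meas h_int)
  simpa only [h_indep.mgf_sum₀ h_meas, Finset.sum_apply] using h

theorem ProbabilityTheory.iIndepFun.measureReal_sum_sub_sum_nonneg_le [Fintype ι]
    {Y : ι → Ω → ℝ} (h_indep : iIndepFun (Sum.elim X Y) μ) (hX_meas : ∀ i, AEMeasurable (X i) μ)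
    (hY_meas : ∀ i, AEMeasurable (Y i) μ) (ht : 0 ≤ t)
    (hX_int : ∀ i, Integrable (fun ω => exp (-t * X i ω)) μ)
    (hY_int : ∀ i, Integrable (fun ω => exp (t * Y i ω)) μ) :
    μ.real {ω | 0 ≤ (∑ i, Y i ω) - ∑ i, X i ω}
      ≤ (∏ i, mgf (X i) μ (-t)) * ∏ i, mgf (Y i) μ t := by
  set Z : ι ⊕ ι → Ω → ℝ := Sum.elim (fun i => -X i) Y
  have hZ_indep : iIndepFun Z μ := by
    convert h_indep.comp (Sum.elim (fun _ => Neg.neg) fun _ => id)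
      (by rintro (i | i); exacts [measurable_neg, measurable_id]) with i
    cases i <;> rfl
  have hZ_meas : ∀ j, AEMeasurable (Z j) μ := by
    rintro (i | i); exacts [(hX_meas i).neg, hY_meas i]
  have hZ_int : ∀ j ∈ Finset.univ, Integrable (fun ω => exp (t * Z j ω)) μ := by
    rintro (i | i) -
    · simpa [Z] using hX_int i
    · exact hY_int i
  have h_event : {ω | 0 ≤ (∑ i, Y i ω) - ∑ i, X i ω} = {ω | 0 ≤ ∑ j, Z j ω} := by
    ext ω
    simp [Z, Fintype.sum_sum_type, sub_eq_neg_add]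
  rw [h_event]
  refine (hZ_indep.measureReal_sum_ge_le_exp_mul_prod_mgf hZ_meas _ 0 ht hZ_int).trans_eq ?_
  simp [Z, Fintype.prod_sum_type, mgf_neg]

end Independent

theorem ProbabilityTheory.IdentDistrib.of_map_eq {α β γ : Type*} [MeasurableSpace α]
    [MeasurableSpace β] [MeasurableSpace γ] {μ : Measure α} {ν : Measure β}
    [IsProbabilityMeasure ν] {f : α → γ} {g : β → γ} (hg : AEMeasurable g ν)
    (h : μ.map f = ν.map g) : IdentDistrib f g μ ν :=
  have := Measure.isProbabilityMeasure_map hg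
  ⟨.of_map_ne_zero (h ▸ IsProbabilityMeasure.ne_zero _), hg, h⟩

theorem ProbabilityTheory.IdentDistrib.integrable_exp_mul_iff {α β : Type*} [MeasurableSpace α]
    [MeasurableSpace β] {μ : Measure α} {ν : Measure β} {f : α → ℝ} {g : β → ℝ}
    (h : IdentDistrib f g μ ν) (t : ℝ) :
    Integrable (fun x => exp (t * f x)) μ ↔ Integrable (fun x => exp (t * g x)) ν :=
  (h.comp (measurable_const_mul t).exp).integrable_iff

section LogLikelihoodRatio

variable {α : Type*} [MeasurableSpace α] {P Q : Measure α}

theorem exp_mul_llr_ae_eq_rpow [SigmaFinite P] [SigmaFinite Q] (hQP : Q ≪ P) (s : ℝ) :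
    (fun x => exp (s * llr P Q x)) =ᵐ[Q] fun x => (P.rnDeriv Q x).toReal ^ s := by
  filter_upwards [exp_llr_of_ac' P Q hQP] with x hx
  rw [mul_comm, exp_mul, hx]

theorem toReal_rnDeriv_mul_exp_mul_llr_ae_eq [SigmaFinite P] [SigmaFinite Q] (hQP : Q ≪ P)
    (s : ℝ) :
    (fun x => (P.rnDeriv Q x).toReal * exp (s * llr P Q x))
      =ᵐ[Q] fun x => exp ((1 + s) * llr P Q x) := by
  filter_upwards [exp_llr_of_ac' P Q hQP] with x hx
  rw [← hx, ← exp_add]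
  ring_nf

theorem integrable_exp_mul_llr_iff [SigmaFinite P] [SigmaFinite Q] (hPQ : P ≪ Q) (hQP : Q ≪ P)
    (s : ℝ) :
    Integrable (fun x => exp (s * llr P Q x)) P
      ↔ Integrable (fun x => exp ((1 + s) * llr P Q x)) Q := by
  rw [← integrable_toReal_rnDeriv_mul_iff hPQ]
  exact integrable_congr (toReal_rnDeriv_mul_exp_mul_llr_ae_eq hQP s)

theorem mgf_llr_eq_mgf_llr_one_add [SigmaFinite P] [SigmaFinite Q] (hPQ : P ≪ Q) (hQP : Q ≪ P)
    (s : ℝ) : mgf (llr P Q) P s = mgf (llr P Q) Q (1 + s) := by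
  rw [mgf, mgf, ← integral_toReal_rnDeriv_mul hPQ]
  exact integral_congr_ae (toReal_rnDeriv_mul_exp_mul_llr_ae_eq hQP s)

theorem integrable_sqrt_toReal_rnDeriv [IsFiniteMeasure P] [IsFiniteMeasure Q] :
    Integrable (fun x => √(P.rnDeriv Q x).toReal) Q := by
  refine ((integrable_const (1 : ℝ)).add (Measure.integrable_toReal_rnDeriv (μ := P))).mono'
    (Measure.measurable_rnDeriv P Q).ennreal_toReal.sqrt.aestronglyMeasurable
    (.of_forall fun x => ?_)
  have := (P.rnDeriv Q x).toReal_nonneg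
  rw [norm_of_nonneg (sqrt_nonneg _), Pi.add_apply]
  exact sqrt_le_iff.mpr ⟨by positivity, by nlinarith⟩

theorem exp_half_mul_llr_ae_eq_sqrt [SigmaFinite P] [SigmaFinite Q] (hQP : Q ≪ P) :
    (fun x => exp (1 / 2 * llr P Q x)) =ᵐ[Q] fun x => √(P.rnDeriv Q x).toReal := by
  filter_upwards [exp_mul_llr_ae_eq_rpow hQP (1 / 2)] with x hx
  rw [hx, sqrt_eq_rpow]

theorem integrable_exp_half_mul_llr [IsFiniteMeasure P] [IsFiniteMeasure Q] (hQP : Q ≪ P) :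
    Integrable (fun x => exp (1 / 2 * llr P Q x)) Q :=
  integrable_sqrt_toReal_rnDeriv.congr (exp_half_mul_llr_ae_eq_sqrt hQP).symm

theorem integrable_exp_neg_half_mul_llr [IsFiniteMeasure P] [IsFiniteMeasure Q] (hPQ : P ≪ Q)
    (hQP : Q ≪ P) : Integrable (fun x => exp (-(1 / 2) * llr P Q x)) P :=
  (integrable_exp_mul_llr_iff hPQ hQP _).2 (by norm_num [integrable_exp_half_mul_llr hQP])

end LogLikelihoodRatio

theorem exp_neg_renyiHalf_mul {P Q : Measure ℝ} [IsFiniteMeasure P] [IsProbabilityMeasure Q]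
    (hQP : Q ≪ P) (n : ℕ) :
    exp (-renyiHalf P Q * n) = mgf (llr P Q) Q (1 / 2) ^ (n + n) := by
  have h_mgf : mgf (llr P Q) Q (1 / 2) = ∫ x, √(P.rnDeriv Q x).toReal ∂Q :=
    integral_congr_ae (exp_half_mul_llr_ae_eq_sqrt hQP)
  have h_pos := mgf_pos (integrable_exp_half_mul_llr hQP)
  rw [renyiHalf, ← h_mgf, ← exp_log (pow_pos h_pos _), log_pow]
  push_cast
  ring_nf

open ProbabilityTheory in
theorem chernoff_renyi_bound_general
    (P Q : Measure ℝ) [IsProbabilityMeasure P] [IsProbabilityMeasure Q]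
    (hPQ : P ≪ Q) (hQP : Q ≪ P)
    (Δ : ℕ)
    {Ω : Type*} [MeasurableSpace Ω] (μ : Measure Ω) [IsProbabilityMeasure μ]
    (X Y : Fin Δ → Ω → ℝ)
    (hindep : iIndepFun (Sum.elim X Y) μ)
    (hX : ∀ i, Measure.map (X i) μ = Measure.map (llr P Q) P)
    (hY : ∀ i, Measure.map (Y i) μ = Measure.map (llr P Q) Q) :
    μ {ω | 0 ≤ (∑ i, Y i ω) - ∑ i, X i ω}
      ≤ ENNReal.ofReal (Real.exp (-(renyiHalf P Q) * Δ)) := by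
  have hXd i : IdentDistrib (X i) (llr P Q) μ P :=
    .of_map_eq (measurable_llr P Q).aemeasurable (hX i)
  have hYd i : IdentDistrib (Y i) (llr P Q) μ Q :=
    .of_map_eq (measurable_llr P Q).aemeasurable (hY i)
  have h_mgf_X i : mgf (X i) μ (-(1 / 2)) = mgf (llr P Q) Q (1 / 2) := by
    rw [mgf_congr_of_identDistrib _ _ (hXd i), mgf_llr_eq_mgf_llr_one_add hPQ hQP]
    norm_num
  have h_mgf_Y i : mgf (Y i) μ (1 / 2) = mgf (llr P Q) Q (1 / 2) :=
    mgf_congr_of_identDistrib _ _ (hYd i) _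
  have h_chernoff := hindep.measureReal_sum_sub_sum_nonneg_le (fun i => (hXd i).aemeasurable_fst)
    (fun i => (hYd i).aemeasurable_fst) (by norm_num : (0 : ℝ) ≤ 1 / 2)
    (fun i => ((hXd i).integrable_exp_mul_iff _).2 (integrable_exp_neg_half_mul_llr hPQ hQP))
    (fun i => ((hYd i).integrable_exp_mul_iff _).2 (integrable_exp_half_mul_llr hQP))
  rw [← ENNReal.ofReal_toReal (measure_ne_top μ _), exp_neg_renyiHalf_mul hQP]
  refine ENNReal.ofReal_le_ofReal (h_chernoff.trans_eq ?_)
  simp only [h_mgf_X, h_mgf_Y, Finset.prod_const, Finset.card_univ, Fintype.card_fin, pow_add]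

open ProbabilityTheory in
/-- **Chernoff bound via the order-1/2 Rényi divergence (equation (13)).**
If `X_1, …, X_Δ, Y_1, …, Y_Δ` are mutually independent, the `X_i` distributed as
`log(dP/dQ)` under `P` and the `Y_i` distributed as `log(dP/dQ)` under `Q`, then
`P(Σ Y_i - Σ X_i ≥ 0) ≤ exp(-α Δ)` where `α` is the order-1/2 Rényi divergence. -/
theorem chernoff_renyi_bound
    (P Q : Measure ℝ) [IsProbabilityMeasure P] [IsProbabilityMeasure Q]
    (hPQ : P ≪ Q) (hQP : Q ≪ P)
    (Δ : ℕ) (hΔ : 1 ≤ Δ)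
    {Ω : Type*} [MeasurableSpace Ω] (μ : Measure Ω) [IsProbabilityMeasure μ]
    (X Y : Fin Δ → Ω → ℝ)
    (hindep : iIndepFun (Sum.elim X Y) μ)
    (hX : ∀ i, Measure.map (X i) μ = Measure.map (llr P Q) P)
    (hY : ∀ i, Measure.map (Y i) μ = Measure.map (llr P Q) Q) :
    μ {ω | 0 ≤ (∑ i, Y i ω) - ∑ i, X i ω}
      ≤ ENNReal.ofReal (Real.exp (-(renyiHalf P Q) * Δ)) :=
  chernoff_renyi_bound_general P Q hPQ hQP Δ μ X Y hindep hX hY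
end
end

section
/- Let (k_n) be integers with 1 ≤ k_n < n/2 and let (μ_n) be a positive real sequence with liminf_{n→∞} μ_n²/(2 log n) > 1. Consider the hidden 2k_n-NN graph model on ZMod n in which the weight of each edge of x* has law N(μ_n, 1) and the weight of each non-edge of x* has law N(0, 1), all weights independent. Let (ε_n) satisfy ε_n → 0 and ε_n log n → ∞, and define the thresholding estimator x̂_TH by declaring a pair e an edge if and only if w_e > √((2 + ε_n) log n). Then the expected number of misclassified pairs, E[ #{ pairs e : e is an edge of x̂_TH XOR e is an edge of x* } ], is o(n k_n); that is, thresholding achieves almost exact recovery. -/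
/-!
The expected error is the sum over pairs of their misclassification probabilities: an edge of
`x*` is missed when its `N(μ, 1)` weight falls below the threshold `τ = √((2 + ε) log n)`, a
non-edge is detected when its `N(0, 1)` weight exceeds `τ`. Chernoff bounds make these
probabilities at most `exp (-(μ - τ)² / 2)` and `exp (-τ² / 2)`. There are at most `n k` edges
and `n²` pairs, so the expected error divided by `n k` is at most
`exp (-(μ - τ)² / 2) + n exp (-τ² / 2)`. The second term is `exp (-ε log n / 2) → 0`. For the
first, if `μ² ≥ 2c log n` with `c > 1`, then once `ε < c - 1` we have
`μ - τ ≥ (√(2c) - √(1 + c)) √(log n) → ∞`.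
-/

open MeasureTheory Filter
open scoped ENNReal NNReal

noncomputable section

namespace ProbabilityTheory

open Real

/-- Chernoff's bound at its optimal parameter `t = (τ - m) / v`; for `v = 0` both sides are `1`
because `x / 0 = 0`. -/
lemma exp_neg_mul_mgf_gaussianReal (m τ : ℝ) (v : ℝ≥0) :
    exp (-((τ - m) / v) * τ) * mgf id (gaussianReal m v) ((τ - m) / v)
      = exp (-(τ - m) ^ 2 / (2 * v)) := by
  rw [mgf_id_gaussianReal, ← exp_add]
  congr 1
  rcases eq_or_ne (v : ℝ) 0 with hv | hv
  · simp [hv]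
  · field_simp
    ring

lemma gaussianReal_real_ge_le {m τ : ℝ} (v : ℝ≥0) (h : m ≤ τ) :
    (gaussianReal m v).real (Set.Ici τ) ≤ exp (-(τ - m) ^ 2 / (2 * v)) := by
  rw [← exp_neg_mul_mgf_gaussianReal]
  exact measure_ge_le_exp_mul_mgf (X := id) τ (div_nonneg (sub_nonneg.2 h) v.2)
    (integrable_exp_mul_gaussianReal _)

lemma gaussianReal_real_le_le {m τ : ℝ} (v : ℝ≥0) (h : τ ≤ m) :
    (gaussianReal m v).real (Set.Iic τ) ≤ exp (-(m - τ) ^ 2 / (2 * v)) := by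
  rw [sub_sq_comm, ← exp_neg_mul_mgf_gaussianReal]
  exact measure_le_le_exp_mul_mgf (X := id) τ
    (div_nonpos_of_nonpos_of_nonneg (sub_nonpos.2 h) v.2) (integrable_exp_mul_gaussianReal _)

end ProbabilityTheory

namespace MeasureTheory

open Finset in
lemma lintegral_ncard_setOf_eq_sum {ι : Type*} [Fintype ι] {α : ι → Type*}
    [∀ i, MeasurableSpace (α i)] (ν : ∀ i, Measure (α i)) [∀ i, IsProbabilityMeasure (ν i)]
    (p : ∀ i, α i → Prop) (hp : ∀ i, MeasurableSet {x | p i x}) :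
    ∫⁻ w, ({i | p i (w i)}.ncard : ℝ≥0∞) ∂Measure.pi ν = ∑ i, ν i {x | p i x} := by
  classical
  have hcount : ∀ w : ∀ i, α i, ({i | p i (w i)}.ncard : ℝ≥0∞)
      = ∑ i, (Function.eval i ⁻¹' {x | p i x}).indicator 1 w := by
    intro w
    rw [Set.ncard_eq_toFinset_card', Set.toFinset_ofPred, card_filter]
    push_cast
    rfl
  simp_rw [hcount]
  rw [lintegral_finsetSum _ fun i _ => measurable_one.indicator (measurable_pi_apply i (hp i))]
  refine sum_congr rfl fun i _ => ?_
  rw [lintegral_indicator_one (measurable_pi_apply i (hp i)),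
    (measurePreserving_eval ν i).measure_preimage (hp i).nullMeasurableSet]

end MeasureTheory

lemma ncard_edgeSet_xstar_le (n k : ℕ) [NeZero n] : (xstar n k).edgeSet.ncard ≤ n * k := by
  set g : ZMod n × Fin k → Sym2 (ZMod n) := fun p => s(p.1, p.1 + ((p.2 : ℕ) + 1 : ℕ))
  have hmem : ∀ a b : ZMod n, a ≠ b → (b - a).val ≤ k → s(a, b) ∈ Set.range g := by
    intro a b hab h
    have hpos : 0 < (b - a).val := by
      rw [Nat.pos_iff_ne_zero, Ne, ZMod.val_eq_zero, sub_eq_zero]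
      exact hab.symm
    refine ⟨(a, ⟨(b - a).val - 1, by omega⟩), ?_⟩
    simp only [g, Nat.sub_add_cancel hpos, ZMod.natCast_zmod_val, add_sub_cancel]
  have hsub : (xstar n k).edgeSet ⊆ Set.range g := by
    intro e he
    induction e using Sym2.ind with
    | h a b =>
      obtain ⟨hab, hd⟩ := he
      simp only [Equiv.refl_symm, Equiv.refl_apply, cycDist] at hd
      rcases le_total (b - a).val (a - b).val with hle | hle
      · exact hmem a b hab (by omega)
      · rw [Sym2.eq_swap]
        exact hmem b a hab.symm (by omega)
  calc (xstar n k).edgeSet.ncard ≤ (Set.range g).ncard := Set.ncard_le_ncard hsub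
    _ ≤ (Set.univ : Set (ZMod n × Fin k)).ncard := by
      rw [← Set.image_univ]
      exact Set.ncard_image_le
    _ = n * k := by simp

lemma card_sym2_zmod_le (n : ℕ) [NeZero n] : Fintype.card (Sym2 (ZMod n)) ≤ n ^ 2 := by
  rw [Sym2.card, ZMod.card, Nat.choose_two_right]
  refine Nat.div_le_of_le_mul ?_
  rw [Nat.add_sub_cancel]
  nlinarith [NeZero.one_le (n := n)]

open scoped Classical in
open Finset in
lemma lintegral_ncard_misclassified_le (n : ℕ) [NeZero n] (P Q : Measure ℝ)
    [IsProbabilityMeasure P] [IsProbabilityMeasure Q] (G : SimpleGraph (ZMod n)) (τ : ℝ) :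
    ∫⁻ w, ({e : Sym2 (ZMod n) | ¬ e.IsDiag ∧ Xor (τ < w e) (e ∈ G.edgeSet)}.ncard : ℝ≥0∞)
        ∂edgeMeasure n P Q G
      ≤ G.edgeSet.ncard * P (Set.Iic τ) + (n ^ 2 : ℕ) * Q (Set.Ioi τ) := by
  have : ∀ e, IsProbabilityMeasure (if e ∈ G.edgeSet then P else Q) := fun e => by
    split_ifs <;> infer_instance
  have hmeas : ∀ e : Sym2 (ZMod n),
      MeasurableSet {x : ℝ | ¬ e.IsDiag ∧ Xor (τ < x) (e ∈ G.edgeSet)} := by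
    intro e
    by_cases hd : e.IsDiag <;> by_cases he : e ∈ G.edgeSet <;>
      simp only [hd, he, xor_def] <;> measurability
  rw [edgeMeasure, dif_neg (NeZero.ne n), lintegral_ncard_setOf_eq_sum _ _ hmeas]
  calc ∑ e, (if e ∈ G.edgeSet then P else Q) {x | ¬ e.IsDiag ∧ Xor (τ < x) (e ∈ G.edgeSet)}
      ≤ ∑ e, if e ∈ G.edgeSet then P (Set.Iic τ) else Q (Set.Ioi τ) := by
        refine sum_le_sum fun e _ => ?_
        split_ifs with he <;> exact measure_mono fun x hx => by simpa [xor_def, he] using hx.2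
    _ = #{e | e ∈ G.edgeSet} * P (Set.Iic τ) + #{e | e ∉ G.edgeSet} * Q (Set.Ioi τ) := by
        rw [sum_ite, sum_const, sum_const, nsmul_eq_mul, nsmul_eq_mul]
    _ ≤ _ := by
        gcongr
        · rw [← Set.ncard_coe_finset]
          simp
        · exact (card_filter_le _ _).trans (card_sym2_zmod_le n)

open ProbabilityTheory Real in
lemma lintegral_ncard_misclassified_gaussian_div_le (n k : ℕ) [NeZero n] (hk : 1 ≤ k)
    {m τ : ℝ} (hτ : 0 ≤ τ) (hτm : τ ≤ m) :
    (∫⁻ w, ({e : Sym2 (ZMod n) | ¬ e.IsDiag ∧ Xor (τ < w e) (e ∈ (xstar n k).edgeSet)}.ncard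
          : ℝ≥0∞) ∂edgeMeasure n (gaussianReal m 1) (gaussianReal 0 1) (xstar n k))
        / ((n * k : ℕ) : ℝ≥0∞)
      ≤ ENNReal.ofReal (exp (-(m - τ) ^ 2 / 2) + n * exp (-τ ^ 2 / 2)) := by
  have hsignal : gaussianReal m 1 (Set.Iic τ) ≤ ENNReal.ofReal (exp (-(m - τ) ^ 2 / 2)) := by
    rw [← ofReal_measureReal]
    gcongr
    simpa using gaussianReal_real_le_le 1 hτm
  have hnoise : gaussianReal 0 1 (Set.Ioi τ) ≤ ENNReal.ofReal (exp (-τ ^ 2 / 2)) := by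
    grw [Set.Ioi_subset_Ici_self, ← ofReal_measureReal]
    gcongr
    simpa using gaussianReal_real_ge_le 1 hτ
  refine ENNReal.div_le_of_le_mul ?_
  calc _ ≤ _ := lintegral_ncard_misclassified_le n _ _ (xstar n k) τ
    _ ≤ ((n * k : ℕ) : ℝ≥0∞) * ENNReal.ofReal (exp (-(m - τ) ^ 2 / 2))
        + ((n * k * n : ℕ) : ℝ≥0∞) * ENNReal.ofReal (exp (-τ ^ 2 / 2)) := by
      gcongr
      · exact_mod_cast ncard_edgeSet_xstar_le n k
      · nlinarith
    _ = _ := by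
      rw [ENNReal.ofReal_add (by positivity) (by positivity), ENNReal.ofReal_mul (by positivity),
        ENNReal.ofReal_natCast]
      push_cast
      ring

open Real in
lemma tendsto_sub_sqrt_atTop {α : Type*} {l : Filter α} {L μ ε : α → ℝ} {c : ℝ} (hc : 1 < c)
    (hL : Tendsto L l atTop) (hμ : ∀ᶠ a in l, 0 ≤ μ a)
    (hcμ : ∀ᶠ a in l, 2 * c * L a ≤ μ a ^ 2) (hε : Tendsto ε l (nhds 0)) :
    Tendsto (fun a => μ a - √((2 + ε a) * L a)) l atTop := by
  have hδ : 0 < √(2 * c) - √(1 + c) := sub_pos.2 (sqrt_lt_sqrt (by linarith) (by linarith))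
  refine tendsto_atTop_mono' l ?_ ((tendsto_sqrt_atTop.comp hL).const_mul_atTop hδ)
  filter_upwards [hμ, hcμ, hε.eventually_lt_const (sub_pos.2 hc), hL.eventually_ge_atTop 0]
    with a hμa hcμa hεa hLa
  have hsignal : √(2 * c) * √(L a) ≤ μ a := by
    rw [← sqrt_mul (by linarith)]
    exact (sqrt_le_sqrt hcμa).trans_eq (sqrt_sq hμa)
  have hthreshold : √((2 + ε a) * L a) ≤ √(1 + c) * √(L a) := by
    rw [← sqrt_mul (by linarith)]
    exact sqrt_le_sqrt (by nlinarith)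
  simp only [Function.comp_apply]
  linarith

open Real in
lemma mul_exp_neg_sqrt_sq_div_two {x e : ℝ} (hx : 0 < x) (h : 0 ≤ (2 + e) * log x) :
    x * exp (-√((2 + e) * log x) ^ 2 / 2) = exp (-(e * log x / 2)) := by
  rw [sq_sqrt h]
  nth_rewrite 1 [← exp_log hx]
  rw [← exp_add]
  ring_nf

open ProbabilityTheory in
/-- **Almost exact recovery via simple thresholding in the Gaussian model (Section 4.1).**
With weights `N(μ_n,1)` on the hidden `2k_n`-NN graph and `N(0,1)` elsewhere, if
`liminf μ_n²/(2 log n) > 1`, `ε_n → 0` and `ε_n log n → ∞`, then the estimator declaring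
`e` an edge iff `w_e > √((2+ε_n) log n)` misclassifies an expected `o(n k_n)` pairs of
distinct vertices. -/
theorem thresholding_almost_exact_recovery
    (k : ℕ → ℕ) (μ : ℕ → ℝ) (hμ : ∀ n, 0 < μ n)
    (hk : ∀ᶠ n in atTop, 1 ≤ k n ∧ 2 * k n < n)
    (hliminf : ∃ c : ℝ, 1 < c ∧ ∀ᶠ n in atTop, c ≤ (μ n) ^ 2 / (2 * Real.log n))
    (ε : ℕ → ℝ) (hε0 : Tendsto ε atTop (nhds 0))
    (hεlog : Tendsto (fun n => ε n * Real.log n) atTop atTop) :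
    Tendsto (fun n =>
        (∫⁻ w, (({e : Sym2 (ZMod n) | ¬ e.IsDiag ∧
              Xor' (Real.sqrt ((2 + ε n) * Real.log n) < w e)
                (e ∈ (xstar n (k n)).edgeSet)}).ncard : ℝ≥0∞)
          ∂(edgeMeasure n (gaussianReal (μ n) 1) (gaussianReal 0 1) (xstar n (k n))))
        / ((n * k n : ℕ) : ℝ≥0∞))
      atTop (nhds 0) := by
  obtain ⟨c, hc1, hc⟩ := hliminf
  have hlog : Tendsto (fun n : ℕ => Real.log n) atTop atTop :=
    Real.tendsto_log_atTop.comp tendsto_natCast_atTop_atTop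
  have hcμ : ∀ᶠ n : ℕ in atTop, 2 * c * Real.log n ≤ μ n ^ 2 := by
    filter_upwards [hc, hlog.eventually_gt_atTop 0] with n hn hpos
    rw [le_div_iff₀ (by positivity)] at hn
    linarith
  have hgap := tendsto_sub_sqrt_atTop hc1 hlog (.of_forall fun n => (hμ n).le) hcμ hε0
  have hsignal : Tendsto (fun n => Real.exp (-(μ n - √((2 + ε n) * Real.log n)) ^ 2 / 2))
      atTop (nhds 0) := by
    simpa only [neg_div, Function.comp_def] using Real.tendsto_exp_neg_atTop_nhds_zero.comp
      (((tendsto_pow_atTop two_ne_zero).comp hgap).atTop_div_const two_pos)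
  have hnoise : Tendsto (fun n : ℕ => n * Real.exp (-√((2 + ε n) * Real.log n) ^ 2 / 2))
      atTop (nhds 0) := by
    refine (Real.tendsto_exp_neg_atTop_nhds_zero.comp (hεlog.atTop_div_const two_pos)).congr' ?_
    filter_upwards [hεlog.eventually_ge_atTop 0, hlog.eventually_ge_atTop 0,
      eventually_gt_atTop 0] with n hεn hn hpos
    exact (mul_exp_neg_sqrt_sq_div_two (by exact_mod_cast hpos) (by nlinarith)).symm
  refine tendsto_of_tendsto_of_tendsto_of_le_of_le' tendsto_const_nhds
    (by simpa using ENNReal.tendsto_ofReal (hsignal.add hnoise))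
    (.of_forall fun _ => zero_le) ?_
  filter_upwards [hk, hgap.eventually_ge_atTop 0, eventually_ne_atTop 0] with n hkn hτμ hn
  have : NeZero n := ⟨hn⟩
  exact lintegral_ncard_misclassified_gaussian_div_le n (k n) hkn.1 (Real.sqrt_nonneg _)
    (sub_nonneg.1 hτμ)

end
end

section
/- Let (k_n) be integers with 1 ≤ k_n < n/2 and log k_n = o(log n), and suppose there is η > 0 such that ε_n ≤ n^{−1/2−η} for all sufficiently large n, where ε_n ∈ [0,1]. Consider the random graph w on ZMod n in which each unordered pair e of distinct vertices is independently an edge with probability p_n = 1 − ε_n + 2ε_n k_n/(n−1) if e is an edge of x*, and with probability q_n = 2ε_n k_n/(n−1) otherwise. For a vertex j, let E_{x*}(j) (respectively E_w(j)) denote the set of edges of x* (respectively of w) having at least one endpoint in N_{x*}(j) ∪ {j}, where N_{x*}(j) is the neighborhood of j in x*. Then with probability tending to 1 as n → ∞, the following hold simultaneously: (i) E_w(0) = E_{x*}(0); (ii) for every vertex j, the symmetric difference E_w(j) △ E_{x*}(j) has at most one element; and (iii) for every vertex j, the pair {j, j + k_n + 1} is not an edge of w. -/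
open MeasureTheory Filter
open scoped ENNReal NNReal

noncomputable section

/-- The Bernoulli distribution with success probability `p`, as a measure on `ℝ`
(mass `p` at `1` and mass `1-p` at `0`). -/
def bernoulliReal (p : ℝ) : Measure ℝ :=
  ENNReal.ofReal p • Measure.dirac 1 + ENNReal.ofReal (1 - p) • Measure.dirac 0

/-- The edge set of the observed random graph: pairs of distinct vertices with weight `1`. -/
def wEdgeSet (n : ℕ) (w : Sym2 (ZMod n) → ℝ) : Set (Sym2 (ZMod n)) :=
  {e | ¬ e.IsDiag ∧ w e = 1}

/-- `E_{x*}(j)`: edges of the hidden `2k`-NN graph having at least one endpoint in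
`N_{x*}(j) ∪ {j}`. -/
def ExSet (n k : ℕ) (j : ZMod n) : Set (Sym2 (ZMod n)) :=
  {e ∈ (xstar n k).edgeSet | ∃ u ∈ e, u ∈ insert j ((xstar n k).neighborSet j)}

/-- `E_w(j)`: edges of the observed graph having at least one endpoint in
`N_{x*}(j) ∪ {j}`. -/
def EwSet (n k : ℕ) (w : Sym2 (ZMod n) → ℝ) (j : ZMod n) : Set (Sym2 (ZMod n)) :=
  {e ∈ wEdgeSet n w | ∃ u ∈ e, u ∈ insert j ((xstar n k).neighborSet j)}

/-!
A vertex `j` sees only the `O(k n)` pairs having an endpoint in its closed neighbourhood, and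
only `O(k²)` of them are edges of `x*`. Each edge of `x*` is missing with probability at most
`ε`, each non-edge present with probability `q ≤ 2εk/n`, so the expected number of flipped pairs
near `j` is `O(k² ε)`. By independence two distinct flips near `j` have probability
`O((k² ε)²)`; a union bound over the `n` vertices gives `O(n k⁴ ε²)`, and the pairs
`{j, j + k + 1}` are non-edges of `x*` (once `2k + 2 ≤ n`) contributing `n q = O(k ε)`.
Since `k = n^{o(1)}` and `ε ≤ n^{-1/2-η}`, all three terms tend to `0`.
-/

open Finset Topology

namespace MeasureTheory.Measure

variable {ι α : Type*} [Fintype ι] [MeasurableSpace α] (ν : ι → Measure α)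
  [∀ i, IsProbabilityMeasure (ν i)]

lemma pi_setOf_apply_mem (i : ι) (A : Set α) : Measure.pi ν {w | w i ∈ A} = ν i A := by
  have : {w : ι → α | w i ∈ A} = (({i} : Finset ι) : Set ι).pi fun _ => A := by ext; simp
  rw [this, pi_pi_finset, prod_singleton]

lemma pi_biUnion_offDiag_le [DecidableEq ι] (R : Finset ι) (A : ι → Set α) :
    Measure.pi ν (⋃ ij ∈ R.offDiag, ({ij.1, ij.2} : Set ι).pi A) ≤
      (∑ i ∈ R, ν i (A i)) ^ 2 :=
  calc _ ≤ ∑ ij ∈ R.offDiag, Measure.pi ν (({ij.1, ij.2} : Set ι).pi A) :=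
        measure_biUnion_finset_le _ _
    _ = ∑ ij ∈ R.offDiag, ν ij.1 (A ij.1) * ν ij.2 (A ij.2) := by
        refine Finset.sum_congr rfl fun ij hij => ?_
        rw [← coe_pair, pi_pi_finset, prod_pair (mem_offDiag.mp hij).2.2]
    _ ≤ ∑ ij ∈ R ×ˢ R, ν ij.1 (A ij.1) * ν ij.2 (A ij.2) :=
        sum_le_sum_of_subset fun ij h =>
          mem_product.mpr ⟨(mem_offDiag.mp h).1, (mem_offDiag.mp h).2.1⟩
    _ = (∑ i ∈ R, ν i (A i)) ^ 2 := by rw [sq, sum_mul_sum, sum_product]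

end MeasureTheory.Measure

namespace MeasureTheory

lemma tendsto_measure_of_compl_le {ι : Type*} {Ω : ι → Type*} [∀ i, MeasurableSpace (Ω i)]
    {l : Filter ι} {μ : ∀ i, Measure (Ω i)} {A : ∀ i, Set (Ω i)} {b : ι → ℝ}
    (hμ : ∀ᶠ i in l, IsProbabilityMeasure (μ i))
    (hA : ∀ᶠ i in l, μ i (A i)ᶜ ≤ ENNReal.ofReal (b i)) (hb : Tendsto b l (𝓝 0)) :
    Tendsto (fun i => μ i (A i)) l (𝓝 1) := by
  have hlower : Tendsto (fun i => 1 - ENNReal.ofReal (b i)) l (𝓝 1) := by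
    simpa using ENNReal.Tendsto.sub tendsto_const_nhds (ENNReal.tendsto_ofReal hb)
      (Or.inl ENNReal.one_ne_top)
  refine tendsto_of_tendsto_of_tendsto_of_le_of_le' hlower tendsto_const_nhds ?_ ?_
  · filter_upwards [hμ, hA] with i _ hi
    calc 1 - ENNReal.ofReal (b i) ≤ 1 - μ i (A i)ᶜ := tsub_le_tsub_left hi 1
      _ ≤ μ i (A i) := by
        rw [tsub_le_iff_right, ← measure_univ (μ := μ i), ← Set.union_compl_self (A i)]
        exact measure_union_le _ _
  · filter_upwards [hμ] with i _
    exact prob_le_one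

end MeasureTheory

lemma isProbabilityMeasure_bernoulliReal {p : ℝ} (h0 : 0 ≤ p) (h1 : p ≤ 1) :
    IsProbabilityMeasure (bernoulliReal p) := by
  constructor
  simp [bernoulliReal, ← ENNReal.ofReal_add h0 (sub_nonneg.mpr h1)]

lemma bernoulliReal_singleton_one (p : ℝ) : bernoulliReal p {1} = ENNReal.ofReal p := by
  simp [bernoulliReal]

lemma bernoulliReal_compl_singleton_one (p : ℝ) :
    bernoulliReal p {1}ᶜ = ENNReal.ofReal (1 - p) := by
  simp [bernoulliReal]

open scoped Classical

namespace SmallWorld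

section

variable {n k : ℕ}

lemma cycDist_comm (a b : ZMod n) : cycDist a b = cycDist b a := min_comm _ _

lemma cycDist_self (a : ZMod n) : cycDist a a = 0 := by simp [cycDist]

lemma cycDist_sub_zero (u v : ZMod n) : cycDist (v - u) 0 = cycDist u v := by
  simp only [cycDist, sub_zero, zero_sub, neg_sub]
  exact min_comm _ _

lemma xstar_adj {u v : ZMod n} : (xstar n k).Adj u v ↔ u ≠ v ∧ cycDist u v ≤ k := Iff.rfl

lemma insert_neighborSet_xstar (j : ZMod n) :
    insert j ((xstar n k).neighborSet j) = {v | cycDist v j ≤ k} := by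
  ext v
  rcases eq_or_ne v j with rfl | hv
  · simp [cycDist_self]
  · simp [hv, xstar_adj, hv.symm, cycDist_comm j v]

lemma s_add_succ_notMem_edgeSet_xstar (hn : 2 * k + 2 ≤ n) (j : ZMod n) :
    s(j, j + (k : ZMod n) + 1) ∉ (xstar n k).edgeSet := by
  have : NeZero n := ⟨by omega⟩
  have hval : ((k : ZMod n) + 1).val = k + 1 := by
    rw [← Nat.cast_succ, ZMod.val_cast_of_lt (by omega)]
  have hne : (k : ZMod n) + 1 ≠ 0 := fun h => by simp [h] at hval
  rw [SimpleGraph.mem_edgeSet, xstar_adj]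
  rintro ⟨-, hle⟩
  simp only [cycDist, show j - (j + (k : ZMod n) + 1) = -((k : ZMod n) + 1) by ring,
    show j + (k : ZMod n) + 1 - j = (k : ZMod n) + 1 by ring, ZMod.neg_val, if_neg hne,
    hval] at hle
  omega

def flipValues (G : SimpleGraph (ZMod n)) (e : Sym2 (ZMod n)) : Set ℝ :=
  if e ∈ G.edgeSet then {1}ᶜ else if e.IsDiag then ∅ else {1}

lemma mem_symmDiff_wEdgeSet_iff {G : SimpleGraph (ZMod n)} {w : Sym2 (ZMod n) → ℝ}
    {e : Sym2 (ZMod n)} : e ∈ symmDiff (wEdgeSet n w) G.edgeSet ↔ w e ∈ flipValues G e := by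
  by_cases he : e ∈ G.edgeSet
  · simp [flipValues, wEdgeSet, Set.mem_symmDiff, he, G.not_isDiag_of_mem_edgeSet he]
  · by_cases hd : e.IsDiag <;> simp [flipValues, wEdgeSet, Set.mem_symmDiff, he, hd]

lemma symmDiff_EwSet_ExSet (w : Sym2 (ZMod n) → ℝ) (j : ZMod n) :
    symmDiff (EwSet n k w j) (ExSet n k j) =
      symmDiff (wEdgeSet n w) (xstar n k).edgeSet ∩ {e | ∃ u ∈ e, cycDist u j ≤ k} := by
  rw [Set.inter_symmDiff_distrib_right]
  simp only [EwSet, ExSet, insert_neighborSet_xstar]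
  rfl

variable (n k) in
def goodEvent : Set (Sym2 (ZMod n) → ℝ) :=
  {w | EwSet n k w 0 = ExSet n k 0 ∧
    (∀ j : ZMod n, (symmDiff (EwSet n k w j) (ExSet n k j)).ncard ≤ 1) ∧
    (∀ j : ZMod n, s(j, j + (k : ZMod n) + 1) ∉ wEdgeSet n w)}

def edgeLaw (G : SimpleGraph (ZMod n)) (P Q : Measure ℝ) (e : Sym2 (ZMod n)) : Measure ℝ :=
  if e ∈ G.edgeSet then P else Q

instance (G : SimpleGraph (ZMod n)) (P Q : Measure ℝ) [IsProbabilityMeasure P]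
    [IsProbabilityMeasure Q] (e : Sym2 (ZMod n)) : IsProbabilityMeasure (edgeLaw G P Q e) := by
  unfold edgeLaw; split <;> infer_instance

lemma edgeLaw_flipValues_le (G : SimpleGraph (ZMod n)) (p q : ℝ) (e : Sym2 (ZMod n)) :
    edgeLaw G (bernoulliReal p) (bernoulliReal q) e (flipValues G e) ≤
      if e ∈ G.edgeSet then ENNReal.ofReal (1 - p) else ENNReal.ofReal q := by
  by_cases he : e ∈ G.edgeSet
  · simp [edgeLaw, flipValues, he, bernoulliReal_compl_singleton_one]
  · by_cases hd : e.IsDiag <;> simp [edgeLaw, flipValues, he, hd, bernoulliReal_singleton_one]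

-- `(2k+2)²` bounds the edges of `x*`, and `(2k+2)n` all pairs, with an endpoint near a vertex.
variable (n k) in
def nearFlipBound (p q : ℝ) : ℝ := (2 * k + 2) ^ 2 * (1 - p) + (2 * k + 2) * n * q

lemma nearFlipBound_nonneg {p q : ℝ} (hp : p ≤ 1) (hq : 0 ≤ q) :
    0 ≤ nearFlipBound n k p q := by
  have : 0 ≤ 1 - p := by linarith
  unfold nearFlipBound
  positivity

variable [NeZero n]

def cycBall (n k : ℕ) [NeZero n] (j : ZMod n) : Finset (ZMod n) := {v | cycDist v j ≤ k}

def nearPairs (n k : ℕ) [NeZero n] (j : ZMod n) : Finset (Sym2 (ZMod n)) :=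
  {e | ∃ u ∈ e, cycDist u j ≤ k}

lemma mem_nearPairs {j : ZMod n} {e : Sym2 (ZMod n)} :
    e ∈ nearPairs n k j ↔ ∃ u ∈ e, cycDist u j ≤ k := by
  simp [nearPairs]

lemma card_cycBall_le (j : ZMod n) : #(cycBall n k j) ≤ 2 * k + 2 := by
  have hsub : cycBall n k j ⊆
      (range (k + 1)).image (fun i : ℕ => j + i) ∪
        (range (k + 1)).image (fun i : ℕ => j - i) := by
    intro v hv
    simp only [cycBall, mem_filter_univ] at hv
    unfold cycDist at hv
    simp only [mem_union, mem_image, mem_range]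
    rcases min_le_iff.mp hv with h | h
    · exact Or.inl ⟨_, Nat.lt_succ_of_le h, by simp⟩
    · exact Or.inr ⟨_, Nat.lt_succ_of_le h, by simp⟩
  calc #(cycBall n k j) ≤ _ := card_le_card hsub
    _ ≤ _ := card_union_le _ _
    _ ≤ (k + 1) + (k + 1) := by
        gcongr <;> exact card_image_le.trans (card_range _).le
    _ = 2 * k + 2 := by ring

lemma card_nearPairs_le (j : ZMod n) : #(nearPairs n k j) ≤ (2 * k + 2) * n := by
  have hsub : nearPairs n k j ⊆ (cycBall n k j ×ˢ univ).image fun p => s(p.1, p.2) := by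
    intro e he
    obtain ⟨u, hu, hd⟩ := mem_nearPairs.mp he
    exact mem_image.mpr ⟨(u, Sym2.Mem.other hu), by simp [cycBall, hd], Sym2.other_spec hu⟩
  calc #(nearPairs n k j) ≤ _ := card_le_card hsub
    _ ≤ #(cycBall n k j ×ˢ univ) := card_image_le
    _ = #(cycBall n k j) * n := by rw [card_product, card_univ, ZMod.card]
    _ ≤ (2 * k + 2) * n := by gcongr; exact card_cycBall_le j

lemma card_nearPairs_edges_le (j : ZMod n) :
    #{e ∈ nearPairs n k j | e ∈ (xstar n k).edgeSet} ≤ (2 * k + 2) ^ 2 := by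
  have hsub : {e ∈ nearPairs n k j | e ∈ (xstar n k).edgeSet} ⊆
      (cycBall n k j ×ˢ cycBall n k 0).image fun p => s(p.1, p.1 + p.2) := by
    intro e he
    obtain ⟨he, hedge⟩ := mem_filter.mp he
    obtain ⟨u, hu, hd⟩ := mem_nearPairs.mp he
    rw [← Sym2.other_spec hu] at hedge ⊢
    rw [SimpleGraph.mem_edgeSet, xstar_adj] at hedge
    refine mem_image.mpr ⟨(u, Sym2.Mem.other hu - u), ?_, by simp⟩
    simpa [cycBall, hd, cycDist_sub_zero] using hedge.2
  calc _ ≤ _ := card_le_card hsub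
    _ ≤ #(cycBall n k j) * #(cycBall n k 0) := card_image_le.trans (card_product _ _).le
    _ ≤ (2 * k + 2) ^ 2 := by
        rw [sq]; exact Nat.mul_le_mul (card_cycBall_le j) (card_cycBall_le 0)

lemma compl_goodEvent_subset :
    (goodEvent n k)ᶜ ⊆
      (⋃ e ∈ nearPairs n k 0, {w | w e ∈ flipValues (xstar n k) e}) ∪
      (⋃ j, ⋃ ef ∈ (nearPairs n k j).offDiag,
        ({ef.1, ef.2} : Set _).pi (flipValues (xstar n k))) ∪
      ⋃ j : ZMod n, {w | w s(j, j + (k : ZMod n) + 1) = 1} := by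
  have hflip : ∀ {w j e}, e ∈ symmDiff (EwSet n k w j) (ExSet n k j) →
      e ∈ nearPairs n k j ∧ w e ∈ flipValues (xstar n k) e := fun he => by
    rw [symmDiff_EwSet_ExSet] at he
    exact ⟨mem_nearPairs.mpr he.2, mem_symmDiff_wEdgeSet_iff.mp he.1⟩
  intro w hw
  simp only [goodEvent, Set.mem_compl_iff, Set.mem_ofPred_eq, not_and_or, not_forall, not_le,
    not_not] at hw
  rcases hw with h0 | ⟨j, hj⟩ | ⟨j, hj⟩
  · obtain ⟨e, he⟩ := Set.symmDiff_nonempty.mpr h0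
    obtain ⟨heR, heF⟩ := hflip he
    exact Or.inl (Or.inl (Set.mem_biUnion heR heF))
  · obtain ⟨e, he, f, hf, hef⟩ := (Set.one_lt_ncard (Set.toFinite _)).mp hj
    obtain ⟨heR, heF⟩ := hflip he
    obtain ⟨hfR, hfF⟩ := hflip hf
    refine Or.inl (Or.inr (Set.mem_iUnion.mpr ⟨j, Set.mem_biUnion (x := (e, f)) ?_ ?_⟩))
    · exact mem_offDiag.mpr ⟨heR, hfR, hef⟩
    · simp [heF, hfF]
  · exact Or.inr (Set.mem_iUnion.mpr ⟨j, hj.2⟩)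

lemma edgeMeasure_eq_pi (P Q : Measure ℝ) (G : SimpleGraph (ZMod n)) :
    edgeMeasure n P Q G = Measure.pi (edgeLaw G P Q) := by
  rw [edgeMeasure, dif_neg (NeZero.ne n)]
  rfl

lemma isProbabilityMeasure_edgeMeasure (P Q : Measure ℝ) [IsProbabilityMeasure P]
    [IsProbabilityMeasure Q] (G : SimpleGraph (ZMod n)) :
    IsProbabilityMeasure (edgeMeasure n P Q G) := by
  rw [edgeMeasure_eq_pi]
  infer_instance

lemma sum_nearPairs_flip_le {p q : ℝ} (hp : p ≤ 1) (hq : 0 ≤ q) (j : ZMod n) :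
    ∑ e ∈ nearPairs n k j,
        edgeLaw (xstar n k) (bernoulliReal p) (bernoulliReal q) e (flipValues (xstar n k) e) ≤
      ENNReal.ofReal (nearFlipBound n k p q) := by
  calc _ ≤ ∑ e ∈ nearPairs n k j, if e ∈ (xstar n k).edgeSet then ENNReal.ofReal (1 - p)
          else ENNReal.ofReal q := sum_le_sum fun e _ => edgeLaw_flipValues_le _ p q e
    _ = #{e ∈ nearPairs n k j | e ∈ (xstar n k).edgeSet} * ENNReal.ofReal (1 - p) +
          #{e ∈ nearPairs n k j | e ∉ (xstar n k).edgeSet} * ENNReal.ofReal q := by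
        simp only [sum_ite, sum_const, nsmul_eq_mul]
    _ ≤ ((2 * k + 2) ^ 2 : ℕ) * ENNReal.ofReal (1 - p) +
          ((2 * k + 2) * n : ℕ) * ENNReal.ofReal q := by
        gcongr
        · exact card_nearPairs_edges_le j
        · exact (card_filter_le _ _).trans (card_nearPairs_le j)
    _ = ENNReal.ofReal (((2 * k + 2) ^ 2 : ℕ) * (1 - p) + ((2 * k + 2) * n : ℕ) * q) := by
        rw [ENNReal.ofReal_add (by nlinarith) (by positivity), ENNReal.ofReal_mul (by positivity),
          ENNReal.ofReal_mul (by positivity), ENNReal.ofReal_natCast, ENNReal.ofReal_natCast]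
    _ = ENNReal.ofReal (nearFlipBound n k p q) := by
        push_cast
        rfl

lemma pi_edgeLaw_farPairs_le (hn : 2 * k + 2 ≤ n) (P : Measure ℝ) [IsProbabilityMeasure P]
    {q : ℝ} (hq0 : 0 ≤ q) (hq1 : q ≤ 1) :
    Measure.pi (edgeLaw (xstar n k) P (bernoulliReal q))
        (⋃ j : ZMod n, {w | w s(j, j + (k : ZMod n) + 1) = 1}) ≤ n * ENNReal.ofReal q := by
  have := isProbabilityMeasure_bernoulliReal hq0 hq1
  calc _ ≤ ∑ j : ZMod n, Measure.pi (edgeLaw (xstar n k) P (bernoulliReal q))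
          {w | w s(j, j + (k : ZMod n) + 1) ∈ ({1} : Set ℝ)} := measure_iUnion_fintype_le _ _
    _ = ∑ j : ZMod n, ENNReal.ofReal q := by
        refine Finset.sum_congr rfl fun j _ => ?_
        rw [Measure.pi_setOf_apply_mem, edgeLaw, if_neg (s_add_succ_notMem_edgeSet_xstar hn j),
          bernoulliReal_singleton_one]
    _ = n * ENNReal.ofReal q := by simp [card_univ]

lemma edgeMeasure_compl_goodEvent_le (hn : 2 * k + 2 ≤ n) {p q : ℝ} (hp0 : 0 ≤ p)
    (hp1 : p ≤ 1) (hq0 : 0 ≤ q) (hq1 : q ≤ 1) :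
    edgeMeasure n (bernoulliReal p) (bernoulliReal q) (xstar n k) (goodEvent n k)ᶜ ≤
      ENNReal.ofReal (nearFlipBound n k p q + n * nearFlipBound n k p q ^ 2 + n * q) := by
  have := isProbabilityMeasure_bernoulliReal hp0 hp1
  have := isProbabilityMeasure_bernoulliReal hq0 hq1
  set ν := edgeLaw (xstar n k) (bernoulliReal p) (bernoulliReal q)
  have hs := nearFlipBound_nonneg (n := n) (k := k) hp1 hq0
  set s := nearFlipBound n k p q
  have hnear : ∀ j, ∑ e ∈ nearPairs n k j, ν e (flipValues (xstar n k) e) ≤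
      ENNReal.ofReal s :=
    sum_nearPairs_flip_le hp1 hq0
  have hflip0 :
      Measure.pi ν (⋃ e ∈ nearPairs n k 0, {w | w e ∈ flipValues (xstar n k) e}) ≤
        ENNReal.ofReal s :=
    calc _ ≤ ∑ e ∈ nearPairs n k 0, Measure.pi ν {w | w e ∈ flipValues (xstar n k) e} :=
          measure_biUnion_finset_le _ _
      _ ≤ ENNReal.ofReal s := by simpa only [Measure.pi_setOf_apply_mem] using hnear 0
  have hflip2 : Measure.pi ν (⋃ j, ⋃ ef ∈ (nearPairs n k j).offDiag,
      ({ef.1, ef.2} : Set _).pi (flipValues (xstar n k))) ≤ n * ENNReal.ofReal s ^ 2 :=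
    calc _ ≤ ∑ j : ZMod n, Measure.pi ν (⋃ ef ∈ (nearPairs n k j).offDiag,
            ({ef.1, ef.2} : Set _).pi (flipValues (xstar n k))) := measure_iUnion_fintype_le _ _
      _ ≤ ∑ j : ZMod n, ENNReal.ofReal s ^ 2 := sum_le_sum fun j _ =>
          (Measure.pi_biUnion_offDiag_le ν _ _).trans (by gcongr; exact hnear j)
      _ = n * ENNReal.ofReal s ^ 2 := by simp [card_univ]
  rw [edgeMeasure_eq_pi]
  calc _ ≤ _ := measure_mono compl_goodEvent_subset
    _ ≤ _ := measure_union_le _ _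
    _ ≤ ENNReal.ofReal s + n * ENNReal.ofReal s ^ 2 + n * ENNReal.ofReal q := by
        gcongr
        · exact (measure_union_le _ _).trans (add_le_add hflip0 hflip2)
        · exact pi_edgeLaw_farPairs_le hn _ hq0 hq1
    _ = _ := by
        rw [ENNReal.ofReal_add (by positivity) (by positivity),
          ENNReal.ofReal_add hs (by positivity),
          ENNReal.ofReal_mul (by positivity), ENNReal.ofReal_mul (by positivity),
          ENNReal.ofReal_pow hs, ENNReal.ofReal_natCast]

end

section Parameters

def rewireProb (n k : ℕ) (ε : ℝ) : ℝ := 2 * ε * k / ((n : ℝ) - 1)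

def smallWorld (n k : ℕ) (ε : ℝ) : Measure (Sym2 (ZMod n) → ℝ) :=
  edgeMeasure n (bernoulliReal (1 - ε + rewireProb n k ε)) (bernoulliReal (rewireProb n k ε))
    (xstar n k)

variable {n k : ℕ} {ε : ℝ}

lemma rewireProb_nonneg (hn : 2 * k + 2 ≤ n) (hε : 0 ≤ ε) : 0 ≤ rewireProb n k ε := by
  have hn' : (2 * k + 2 : ℝ) ≤ n := by exact_mod_cast hn
  exact div_nonneg (by positivity) (by linarith)

lemma rewireProb_le (hn : 2 * k + 2 ≤ n) (hε : 0 ≤ ε) : rewireProb n k ε ≤ ε := by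
  have hn' : (2 * k + 2 : ℝ) ≤ n := by exact_mod_cast hn
  rw [rewireProb, div_le_iff₀ (by linarith)]
  nlinarith

lemma natCast_mul_rewireProb_le (hn : 2 * k + 2 ≤ n) (hε : 0 ≤ ε) :
    n * rewireProb n k ε ≤ 4 * k * ε := by
  have hn' : (2 * k + 2 : ℝ) ≤ n := by exact_mod_cast hn
  rw [rewireProb, mul_div_assoc', div_le_iff₀ (by linarith)]
  have : 0 ≤ ε * k := by positivity
  nlinarith

lemma nearFlipBound_rewireProb_le (hn : 2 * k + 2 ≤ n) (hk : 1 ≤ k) (hε : 0 ≤ ε) :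
    nearFlipBound n k (1 - ε + rewireProb n k ε) (rewireProb n k ε) ≤ 32 * k ^ 2 * ε := by
  have hk4 : (2 * k + 2 : ℝ) ≤ 4 * k := by
    have : (1 : ℝ) ≤ k := by exact_mod_cast hk
    linarith
  have hnq := natCast_mul_rewireProb_le hn hε
  have hq := rewireProb_nonneg hn hε
  set q := rewireProb n k ε
  have hedges : (2 * k + 2 : ℝ) ^ 2 * (1 - (1 - ε + q)) ≤ 16 * k ^ 2 * ε :=
    calc (2 * k + 2 : ℝ) ^ 2 * (1 - (1 - ε + q)) ≤ (2 * k + 2) ^ 2 * ε := by gcongr; linarith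
      _ ≤ (4 * k) ^ 2 * ε := by gcongr
      _ = 16 * k ^ 2 * ε := by ring
  have hnonedges : (2 * k + 2 : ℝ) * n * q ≤ 16 * k ^ 2 * ε :=
    calc (2 * k + 2 : ℝ) * n * q = (2 * k + 2) * (n * q) := by ring
      _ ≤ 4 * k * (4 * k * ε) := by gcongr
      _ = 16 * k ^ 2 * ε := by ring
  unfold nearFlipBound
  linarith

lemma isProbabilityMeasure_smallWorld (hn : 2 * k + 2 ≤ n) (hε0 : 0 ≤ ε) (hε1 : ε ≤ 1) :
    IsProbabilityMeasure (smallWorld n k ε) := by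
  have hq0 := rewireProb_nonneg hn hε0
  have hqε := rewireProb_le hn hε0
  have := isProbabilityMeasure_bernoulliReal (p := 1 - ε + rewireProb n k ε)
    (by linarith) (by linarith)
  have := isProbabilityMeasure_bernoulliReal hq0 (by linarith)
  have : NeZero n := ⟨by omega⟩
  exact isProbabilityMeasure_edgeMeasure _ _ _

lemma smallWorld_compl_goodEvent_le (hn : 2 * k + 2 ≤ n) (hk : 1 ≤ k) (hε0 : 0 ≤ ε)
    (hε1 : ε ≤ 1) :
    smallWorld n k ε (goodEvent n k)ᶜ ≤
      ENNReal.ofReal (32 * k ^ 2 * ε + n * (32 * k ^ 2 * ε) ^ 2 + 4 * k * ε) := by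
  have hq0 := rewireProb_nonneg hn hε0
  have hqε := rewireProb_le hn hε0
  have : NeZero n := ⟨by omega⟩
  refine (edgeMeasure_compl_goodEvent_le hn (by linarith) (by linarith) hq0
    (by linarith)).trans (ENNReal.ofReal_le_ofReal ?_)
  have hs := nearFlipBound_rewireProb_le hn hk hε0
  have hs0 := nearFlipBound_nonneg (n := n) (k := k) (p := 1 - ε + rewireProb n k ε)
    (by linarith) hq0
  have hnq := natCast_mul_rewireProb_le hn hε0
  gcongr

end Parameters

section Asymptotics

variable {k : ℕ → ℕ}

lemma eventually_le_rpow_of_tendsto_log_div_log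
    (hlogk : Tendsto (fun n => Real.log (k n) / Real.log n) atTop (𝓝 0)) {c : ℝ} (hc : 0 < c) :
    ∀ᶠ n : ℕ in atTop, (k n : ℝ) ≤ (n : ℝ) ^ c := by
  filter_upwards [hlogk.eventually_lt_const hc, eventually_ge_atTop 2] with n hlt hn
  have hlogn : 0 < Real.log n := Real.log_pos (by exact_mod_cast hn)
  rcases Nat.eq_zero_or_pos (k n) with hk | hk
  · rw [hk, Nat.cast_zero]; positivity
  · refine ((Real.lt_rpow_iff_log_lt (by exact_mod_cast hk) (by positivity)).mpr ?_).le
    rwa [div_lt_iff₀ hlogn] at hlt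

lemma eventually_two_mul_add_two_le
    (hlogk : Tendsto (fun n => Real.log (k n) / Real.log n) atTop (𝓝 0)) :
    ∀ᶠ n in atTop, 2 * k n + 2 ≤ n := by
  filter_upwards [eventually_le_rpow_of_tendsto_log_div_log hlogk one_half_pos,
    eventually_ge_atTop 16] with n hk hn
  have hn' : (16 : ℝ) ≤ n := by exact_mod_cast hn
  rw [← Real.sqrt_eq_rpow] at hk
  have hsq := Real.mul_self_sqrt (Nat.cast_nonneg n)
  have h4 : 4 ≤ Real.sqrt n := Real.le_sqrt_of_sq_le (by linarith)
  have : (2 * k n + 2 : ℝ) ≤ n := by nlinarith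
  exact_mod_cast this

lemma tendsto_errorBound {ε : ℕ → ℝ} {η : ℝ}
    (hlogk : Tendsto (fun n => Real.log (k n) / Real.log n) atTop (𝓝 0))
    (hk : ∀ᶠ n in atTop, 1 ≤ k n) (hε0 : ∀ n, 0 ≤ ε n) (hη : 0 < η)
    (hεη : ∀ᶠ n in atTop, ε n ≤ (n : ℝ) ^ (-(1 / 2 : ℝ) - η)) :
    Tendsto (fun n => 32 * (k n : ℝ) ^ 2 * ε n + n * (32 * (k n : ℝ) ^ 2 * ε n) ^ 2
      + 4 * k n * ε n) atTop (𝓝 0) := by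
  have hpow : ∀ {c : ℝ}, 0 < c → Tendsto (fun n : ℕ => (n : ℝ) ^ (-c)) atTop (𝓝 0) :=
    fun hc => (tendsto_rpow_neg_atTop hc).comp tendsto_natCast_atTop_atTop
  have hkey : ∀ᶠ n : ℕ in atTop,
      (k n : ℝ) ^ 2 * ε n ≤ (n : ℝ) ^ (-((1 + η) / 2)) := by
    filter_upwards [eventually_le_rpow_of_tendsto_log_div_log hlogk (by positivity : 0 < η / 4),
      hεη] with n hkn hεn
    calc (k n : ℝ) ^ 2 * ε n
        ≤ ((n : ℝ) ^ (η / 4)) ^ 2 * (n : ℝ) ^ (-(1 / 2 : ℝ) - η) := by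
          gcongr; exact hε0 n
      _ = (n : ℝ) ^ (-((1 + η) / 2)) := by
          rw [← Real.rpow_mul_natCast (Nat.cast_nonneg n), ← Real.rpow_add' (Nat.cast_nonneg n)]
          · ring_nf
          · push_cast; linarith
  refine squeeze_zero' ?_ ?_ ((((hpow (by positivity : 0 < (1 + η) / 2)).const_mul 36).add
    ((hpow hη).const_mul 1024)).trans (by simp))
  · filter_upwards with n
    have := hε0 n
    positivity
  · filter_upwards [hkey, hk] with n hkey hk
    have hkk : (k n : ℝ) * ε n ≤ (k n : ℝ) ^ 2 * ε n := by
      have : (1 : ℝ) ≤ k n := by exact_mod_cast hk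
      exact mul_le_mul_of_nonneg_right (by nlinarith) (hε0 n)
    have hsq : (n : ℝ) * ((k n : ℝ) ^ 2 * ε n) ^ 2 ≤ (n : ℝ) ^ (-η) := by
      calc _ ≤ (n : ℝ) * ((n : ℝ) ^ (-((1 + η) / 2))) ^ 2 := by
            have := hε0 n
            gcongr
        _ = (n : ℝ) ^ (-η) := by
            rw [← Real.rpow_mul_natCast (Nat.cast_nonneg n),
              ← Real.rpow_one_add' (Nat.cast_nonneg n)]
            · ring_nf
            · push_cast; linarith
    nlinarith

end Asymptotics

end SmallWorld

/-- **Key events for the greedy algorithm in the small-world model (Theorem 4).**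
In the Watts–Strogatz-type model where edges of `x*` are kept with probability
`p_n = 1 - ε_n + 2ε_n k_n/(n-1)` and non-edges appear with probability
`q_n = 2ε_n k_n/(n-1)`, if `ε_n ≤ n^(-1/2-η)` for some `η > 0`, then with probability
tending to one: (i) the observed and true edge sets agree near the vertex `0`;
(ii) near every vertex they differ by at most one edge; and (iii) no pair
`{j, j+k_n+1}` is an observed edge. -/
theorem smallworld_events_whp
    (k : ℕ → ℕ) (ε : ℕ → ℝ)
    (hk : ∀ᶠ n in atTop, 1 ≤ k n ∧ 2 * k n < n)
    (hlogk : Tendsto (fun n => Real.log (k n) / Real.log n) atTop (nhds 0))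
    (hε01 : ∀ n, ε n ∈ Set.Icc (0 : ℝ) 1)
    (hη : ∃ η : ℝ, 0 < η ∧ ∀ᶠ n in atTop, ε n ≤ (n : ℝ) ^ (-(1 / 2 : ℝ) - η)) :
    Tendsto (fun n =>
        edgeMeasure n
          (bernoulliReal (1 - ε n + 2 * ε n * k n / ((n : ℝ) - 1)))
          (bernoulliReal (2 * ε n * k n / ((n : ℝ) - 1)))
          (xstar n (k n))
          {w | EwSet n (k n) w 0 = ExSet n (k n) 0 ∧
            (∀ j : ZMod n, (symmDiff (EwSet n (k n) w j) (ExSet n (k n) j)).ncard ≤ 1) ∧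
            (∀ j : ZMod n, s(j, j + (k n : ZMod n) + 1) ∉ wEdgeSet n w)})
      atTop (nhds 1) := by
  obtain ⟨η, hη0, hεη⟩ := hη
  have hk1 : ∀ᶠ n in atTop, 1 ≤ k n := hk.mono fun _ h => h.1
  have hn := SmallWorld.eventually_two_mul_add_two_le hlogk
  refine tendsto_measure_of_compl_le (μ := fun n => SmallWorld.smallWorld n (k n) (ε n))
    (A := fun n => SmallWorld.goodEvent n (k n)) ?_ ?_
    (SmallWorld.tendsto_errorBound hlogk hk1 (fun n => (hε01 n).1) hη0 hεη)
  · filter_upwards [hn] with n hn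
    exact SmallWorld.isProbabilityMeasure_smallWorld hn (hε01 n).1 (hε01 n).2
  · filter_upwards [hn, hk1] with n hn hk1
    exact SmallWorld.smallWorld_compl_goodEvent_le hn hk1 (hε01 n).1 (hε01 n).2
end
end
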